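/- arXiv:2112.07715 — 7 statements merged into one kernel-verified Lean document; each statement's English description precedes it below -/
import Mathlib

section
/- Let Λ ⊆ Γ be commutative rings with Γ = ∏_{i∈I} Λe_i a product over a complete system of orthogonal idempotents (e_i)_{i∈I} of Γ with Σe_i = 1. Then the conductor 𝔣_Γ = {a ∈ Λ : Γa ⊆ Λ} equals ⊕_{i∈I} (Λ ∩ e_iΛ). -/
/-- Let `Λ ⊆ Γ` be commutative rings, where `Γ = ∏_{i∈I} Λe_i` for a finite complete system
of orthogonal idempotents `(e_i)_{i∈I}` of `Γ` (so `Σ_i e_i = 1`, `e_i e_j = δ_{ij} e_i`,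
and every `γ ∈ Γ` satisfies `γ e_i ∈ Λ e_i` for all `i`).  Then the conductor
`𝔣_Γ = {a ∈ Λ : Γ·a ⊆ Λ}` equals `⊕_{i∈I} (Λ ∩ e_iΛ)`, i.e. an element `a` lies in the
conductor if and only if `a = Σ_i c_i` with each `c_i ∈ Λ ∩ e_iΛ`. -/
theorem conductor_eq_sum_inter
    (Γ : Type*) [CommRing Γ] (Λ : Subring Γ)
    (I : Type*) [Fintype I] [DecidableEq I] (e : I → Γ)
    (hsum : ∑ i, e i = 1)
    (horth : ∀ i j, e i * e j = if i = j then e i else 0)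
    (hprod : ∀ γ : Γ, ∀ i, ∃ a ∈ Λ, γ * e i = a * e i) :
    ∀ a : Γ,
      (a ∈ Λ ∧ ∀ γ : Γ, γ * a ∈ Λ) ↔
        (∃ c : I → Γ, (∀ i, c i ∈ Λ ∧ ∃ b ∈ Λ, c i = e i * b) ∧ a = ∑ i, c i) := by
  intro a
  constructor
  · rintro ⟨ha, hcond⟩
    refine ⟨fun i => e i * a, fun i => ⟨by simpa [mul_comm] using hcond (e i), a, ha, rfl⟩, ?_⟩
    rw [← Finset.sum_mul, hsum, one_mul]
  · rintro ⟨c, hc, rfl⟩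
    constructor
    · exact Subring.sum_mem _ fun i _ => (hc i).1
    · intro γ
      rw [Finset.mul_sum]
      refine Subring.sum_mem _ fun i _ => ?_
      obtain ⟨hci, b, hb, hcb⟩ := hc i
      obtain ⟨x, hx, hxe⟩ := hprod γ i
      have : γ * c i = x * c i := by
        rw [hcb, ← mul_assoc, hxe, mul_assoc]
      rw [this]
      exact Subring.mul_mem _ hx hci
end

section
/- Let L be a ℤ-lattice (a finitely generated free ℤ-module with a nondegenerate integral symmetric bilinear form) and f an isometry of L of prime order p. Set A = ker Φ₁(f) = L^f and B = ker Φ_p(f), where Φ_k denotes the k-th cyclotomic polynomial. Then pL ⊆ A ⊕ B ⊆ L, and A and B are orthogonal: b(a, c) = 0 for all a ∈ A, c ∈ B. -/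
open Polynomial

/-- Let `(L, b)` be a `ℤ`-lattice (a finitely generated free `ℤ`-module with a
nondegenerate symmetric bilinear form) and `f` an isometry of `L` of prime order `p`.
With `A = ker Φ₁(f) = L^f` and `B = ker Φ_p(f)`, one has `pL ⊆ A ⊕ B ⊆ L` and `A ⊥ B`. -/
theorem prime_order_isometry_sandwich
    (p : ℕ) (hp : p.Prime)
    (L : Type*) [AddCommGroup L] [Module ℤ L] [Module.Free ℤ L] [Module.Finite ℤ L]
    (b : L →ₗ[ℤ] L →ₗ[ℤ] ℤ)
    (hsymm : ∀ x y, b x y = b y x)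
    (hnondeg : ∀ x, (∀ y, b x y = 0) → x = 0)
    (f : Module.End ℤ L)
    (hisom : ∀ x y, b (f x) (f y) = b x y)
    (hord : orderOf f = p) :
    (∀ x : L, ∃ a ∈ LinearMap.ker (aeval f (cyclotomic 1 ℤ)),
        ∃ c ∈ LinearMap.ker (aeval f (cyclotomic p ℤ)), (p : ℤ) • x = a + c) ∧
      (∀ a ∈ LinearMap.ker (aeval f (cyclotomic 1 ℤ)),
        ∀ c ∈ LinearMap.ker (aeval f (cyclotomic p ℤ)), b a c = 0) := by
  haveI : Fact p.Prime := ⟨hp⟩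
  have hfp : f ^ p = 1 := by rw [← hord]; exact pow_orderOf_eq_one f
  have hmul : cyclotomic 1 ℤ * cyclotomic p ℤ = X ^ p - 1 := by
    rw [cyclotomic_one, cyclotomic_prime ℤ p, mul_comm, geom_sum_mul]
  have haeval_mul : aeval f (X ^ p - 1 : ℤ[X]) = 0 := by
    simp [hfp]
  have hdvd : (X - C (1 : ℤ)) ∣ (cyclotomic p ℤ - C (p : ℤ)) := by
    rw [dvd_iff_isRoot]
    simp [IsRoot, eval_one_cyclotomic_prime]
  obtain ⟨g, hg⟩ := hdvd
  constructor
  · intro x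
    refine ⟨aeval f (cyclotomic p ℤ) x, ?_, (p : ℤ) • x - aeval f (cyclotomic p ℤ) x, ?_, by abel⟩
    · rw [LinearMap.mem_ker]
      have : aeval f (cyclotomic 1 ℤ) (aeval f (cyclotomic p ℤ) x)
          = aeval f (cyclotomic 1 ℤ * cyclotomic p ℤ) x := by
        rw [map_mul]; rfl
      rw [this, hmul, haeval_mul]; rfl
    · rw [LinearMap.mem_ker]
      have hc : (p : ℤ) • x - aeval f (cyclotomic p ℤ) x
          = aeval f (C (p : ℤ) - cyclotomic p ℤ) x := by
        simp [map_sub, aeval_C, Module.algebraMap_end_apply]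
      have hpoly : cyclotomic p ℤ * (C (p : ℤ) - cyclotomic p ℤ)
          = (X ^ p - 1) * (-g) := by
        have h1 : C (p : ℤ) - cyclotomic p ℤ = -((X - C 1) * g) := by
          rw [← hg]; ring
        rw [h1, ← hmul, cyclotomic_one, map_one]; ring
      have : aeval f (cyclotomic p ℤ) (((p : ℤ) • x) - aeval f (cyclotomic p ℤ) x)
          = aeval f (cyclotomic p ℤ * (C (p : ℤ) - cyclotomic p ℤ)) x := by
        rw [map_mul, hc]; rfl
      rw [this, hpoly, map_mul, haeval_mul, zero_mul]; rfl
  · intro a ha c hc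
    rw [LinearMap.mem_ker] at ha hc
    have hfa : f a = a := by
      have : aeval f (cyclotomic 1 ℤ) a = f a - a := by
        simp [cyclotomic_one, map_sub]
      rw [this] at ha
      exact sub_eq_zero.mp ha
    have hfia : ∀ i : ℕ, (f ^ i) a = a := by
      intro i
      induction i with
      | zero => rfl
      | succ n ih => rw [pow_succ, Module.End.mul_apply, hfa, ih]
    have hiso : ∀ (i : ℕ) (x y : L), b ((f ^ i) x) ((f ^ i) y) = b x y := by
      intro i
      induction i with
      | zero => intro x y; rfl
      | succ n ih =>
        intro x y
        rw [pow_succ, Module.End.mul_apply, Module.End.mul_apply, ih, hisom]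
    have hsum : (∑ i ∈ Finset.range p, (f ^ i)) c = 0 := by
      have : aeval f (cyclotomic p ℤ) = ∑ i ∈ Finset.range p, f ^ i := by
        rw [cyclotomic_prime ℤ p]; simp
      rw [← this, hc]
    have key : (p : ℤ) * b a c = 0 := by
      have h1 : b a ((∑ i ∈ Finset.range p, (f ^ i)) c) = 0 := by rw [hsum, map_zero]
      have h2 : b a ((∑ i ∈ Finset.range p, (f ^ i)) c)
          = ∑ i ∈ Finset.range p, b a ((f ^ i) c) := by
        rw [LinearMap.sum_apply, map_sum]
      have h3 : ∀ i ∈ Finset.range p, b a ((f ^ i) c) = b a c := by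
        intro i _
        calc b a ((f ^ i) c) = b ((f ^ i) a) ((f ^ i) c) := by rw [hfia i]
          _ = b a c := hiso i a c
      have h4 : ∑ i ∈ Finset.range p, b a ((f ^ i) c) = (p : ℤ) * b a c := by
        rw [Finset.sum_congr rfl h3, Finset.sum_const, Finset.card_range,
          nsmul_eq_mul]
      rw [← h4, ← h2, h1]
    have hpne : (p : ℤ) ≠ 0 := by exact_mod_cast hp.ne_zero
    exact (mul_eq_zero.mp key).resolve_left hpne
end

section
/- Let M and N be even ℤ-lattices with an anti-isometry φ: H_M → H_N between subgroups H_M ⊆ D_M and H_N ⊆ D_N of their discriminant groups (i.e., q_M(x) = -q_N(φ(x)) for all x ∈ H_M). Let L_φ ⊆ M^∨ ⊕ N^∨ be the preimage of the graph of φ under the projection M^∨ ⊕ N^∨ → D_M ⊕ D_N. Then L_φ is an even integral lattice containing M ⊥ N with both M and N primitive in L_φ, and |det L_φ| = |det M| · |det N| / [L_φ : M ⊥ N]². -/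
attribute [instance 2000] Submodule.module

/-- The dual lattice `M^∨ = {x ∈ V : B(x, M) ⊆ ℤ}` of a `ℤ`-lattice `M` in a rational
quadratic space `(V, B)`. -/
def dualLat {V : Type*} [AddCommGroup V] [Module ℚ V]
    (B : V →ₗ[ℚ] V →ₗ[ℚ] ℚ) (M : Submodule ℤ V) : Submodule ℤ V where
  carrier := {x | ∀ m ∈ M, ∃ k : ℤ, B x m = (k : ℚ)}
  add_mem' := by
    intro x y hx hy m hm
    obtain ⟨a, ha⟩ := hx m hm
    obtain ⟨c, hc⟩ := hy m hm
    exact ⟨a + c, by simp [map_add, LinearMap.add_apply, ha, hc]⟩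
  zero_mem' := by
    intro m hm
    exact ⟨0, by simp⟩
  smul_mem' := by
    intro c x hx m hm
    obtain ⟨a, ha⟩ := hx m hm
    refine ⟨c * a, ?_⟩
    rw [← Int.cast_smul_eq_zsmul ℚ c x, map_smul]
    simp [ha]

/-- The discriminant group `D_M = M^∨/M` of an even lattice `M`. -/
abbrev discQuot {V : Type*} [AddCommGroup V] [Module ℚ V]
    (B : V →ₗ[ℚ] V →ₗ[ℚ] ℚ) (M : Submodule ℤ V) : Type _ :=
  ↥(dualLat B M) ⧸ M.comap (dualLat B M).subtype

/-- The orthogonal direct sum of two rational bilinear forms. -/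
def prodForm {V W : Type*} [AddCommGroup V] [Module ℚ V] [AddCommGroup W] [Module ℚ W]
    (BV : V →ₗ[ℚ] V →ₗ[ℚ] ℚ) (BW : W →ₗ[ℚ] W →ₗ[ℚ] ℚ) :
    (V × W) →ₗ[ℚ] (V × W) →ₗ[ℚ] ℚ :=
  LinearMap.mk₂ ℚ (fun z w => BV z.1 w.1 + BW z.2 w.2)
    (by intro m₁ m₂ n; simp [map_add]; ring)
    (by intro c m n; simp [map_smul]; ring)
    (by intro m n₁ n₂; simp [map_add]; ring)
    (by intro c m n; simp [map_smul]; ring)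

section AuxA
open Submodule

variable {U : Type*} [AddCommGroup U] [Module ℚ U]

lemma dualLat_antitone (B : U →ₗ[ℚ] U →ₗ[ℚ] ℚ) {S T : Submodule ℤ U} (h : S ≤ T) :
    dualLat B T ≤ dualLat B S := fun _ hx m hm => hx m (h hm)

lemma exists_int_smul_mem_spanInt {s : Set U} {t : U} (ht : t ∈ Submodule.span ℚ s) :
    ∃ d : ℤ, d ≠ 0 ∧ d • t ∈ Submodule.span ℤ s := by
  induction ht using Submodule.span_induction with
  | mem x hx => exact ⟨1, one_ne_zero, by simpa using Submodule.subset_span hx⟩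
  | zero => exact ⟨1, one_ne_zero, by simp⟩
  | add x y _ _ hx hy =>
      obtain ⟨d, hd, hdx⟩ := hx
      obtain ⟨e, he, hey⟩ := hy
      refine ⟨d * e, mul_ne_zero hd he, ?_⟩
      rw [smul_add]
      exact Submodule.add_mem _
        (by rw [mul_comm, mul_smul]; exact Submodule.smul_mem _ _ hdx)
        (by rw [mul_smul]; exact Submodule.smul_mem _ _ hey)
  | smul q x _ hx =>
      obtain ⟨d, hd, hdx⟩ := hx
      refine ⟨(q.den : ℤ) * d, mul_ne_zero (by exact_mod_cast q.den_nz) hd, ?_⟩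
      have : ((q.den : ℤ) * d) • q • x = (q.num * d) • x := by
        rw [← Int.cast_smul_eq_zsmul ℚ, ← Int.cast_smul_eq_zsmul ℚ, smul_smul]
        congr 1
        push_cast
        rw [mul_comm ((q.den : ℚ)) (d : ℚ), mul_assoc, mul_comm ((q.den : ℚ)) q,
          Rat.mul_den_eq_num]
        ring
      rw [this, mul_smul]
      exact Submodule.smul_mem _ _ hdx

/-- Tower multiplicativity for cardinalities of quotients. -/
lemma card_quot_tower {R X : Type*} [Ring R] [AddCommGroup X] [Module R X]
    (A B : Submodule R X) (h : A ≤ B) :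
    Nat.card (X ⧸ A) = Nat.card (X ⧸ B) * Nat.card (↥B ⧸ A.comap B.subtype) := by
  have e1 : ((X ⧸ A) ⧸ (B.map A.mkQ)) ≃ₗ[R] X ⧸ B :=
    Submodule.quotientQuotientEquivQuotient A B h
  set f : ↥B →ₗ[R] X ⧸ A := A.mkQ.comp B.subtype with hf
  have hker : LinearMap.ker f = A.comap B.subtype := by
    ext x
    simp [hf, Submodule.Quotient.mk_eq_zero]
  have hrange : LinearMap.range f = B.map A.mkQ := by
    rw [hf, LinearMap.range_comp, Submodule.range_subtype]
  have e2 : (↥B ⧸ A.comap B.subtype) ≃ₗ[R] ↥(B.map A.mkQ) :=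
    (Submodule.quotEquivOfEq _ _ hker.symm).trans
      (f.quotKerEquivRange.trans (LinearEquiv.ofEq _ _ hrange))
  calc Nat.card (X ⧸ A)
      = Nat.card ((X ⧸ A) ⧸ (B.map A.mkQ).toAddSubgroup) *
          Nat.card ↥(B.map A.mkQ).toAddSubgroup :=
        AddSubgroup.card_eq_card_quotient_mul_card_addSubgroup _
    _ = Nat.card (X ⧸ B) * Nat.card (↥B ⧸ A.comap B.subtype) := by
        rw [show Nat.card ((X ⧸ A) ⧸ (B.map A.mkQ).toAddSubgroup)
              = Nat.card ((X ⧸ A) ⧸ (B.map A.mkQ)) from rfl,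
          Nat.card_congr e1.toEquiv,
          show Nat.card ↥(B.map A.mkQ).toAddSubgroup = Nat.card ↥(B.map A.mkQ) from rfl,
          Nat.card_congr e2.toEquiv.symm]

/-- Flattening: the quotient `B/A` computed inside an ambient submodule `C`. -/
lemma card_quot_comap_eq {R X : Type*} [Ring R] [AddCommGroup X] [Module R X]
    (A B C : Submodule R X) (hBC : B ≤ C) :
    Nat.card (↥(B.comap C.subtype) ⧸
        (A.comap C.subtype).comap (B.comap C.subtype).subtype) =
    Nat.card (↥B ⧸ A.comap B.subtype) := by
  set g : ↥(B.comap C.subtype) →ₗ[R] ↥B ⧸ A.comap B.subtype :=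
    (A.comap B.subtype).mkQ.comp
      (LinearMap.codRestrict B (C.subtype.comp (B.comap C.subtype).subtype)
        (fun x => x.2)) with hg
  have hsurj : Function.Surjective g := by
    intro y
    obtain ⟨b, rfl⟩ := Submodule.mkQ_surjective _ y
    exact ⟨⟨⟨b.1, hBC b.2⟩, b.2⟩, rfl⟩
  have hker : LinearMap.ker g = (A.comap C.subtype).comap (B.comap C.subtype).subtype := by
    ext x
    simp [hg, Submodule.Quotient.mk_eq_zero]
    exact Iff.rfl
  rw [← hker]
  exact Nat.card_congr (g.quotKerEquivOfSurjective hsurj).toEquiv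

end AuxA
section AuxB
open Submodule

variable {U : Type*} [AddCommGroup U] [Module ℚ U]

/-- The span over `ℚ` of a `ℤ`-generating set is the span over `ℚ` of the lattice. -/
lemma spanQ_of_spanZ {s : Set U} {S : Submodule ℤ U} (hs : Submodule.span ℤ s = S)
    (hfull : Submodule.span ℚ (S : Set U) = ⊤) : Submodule.span ℚ s = ⊤ := by
  refine le_antisymm le_top ?_
  rw [← hfull]
  refine Submodule.span_le.2 (fun x hx => ?_)
  have hx' : x ∈ Submodule.span ℤ s := hs ▸ hx
  exact Submodule.span_subset_span ℤ ℚ s hx'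

/-- The dual lattice of a finitely generated full lattice is a finite `ℤ`-module. -/
lemma dualLat_finite [FiniteDimensional ℚ U] (B : U →ₗ[ℚ] U →ₗ[ℚ] ℚ)
    (hnd : ∀ x : U, (∀ y, B x y = 0) → x = 0)
    {S : Submodule ℤ U} (hfg : S.FG) (hfull : Submodule.span ℚ (S : Set U) = ⊤) :
    Module.Finite ℤ ↥(dualLat B S) := by
  classical
  obtain ⟨s, hs⟩ := hfg
  have hspan : Submodule.span ℚ (s : Set U) = ⊤ := spanQ_of_spanZ hs hfull
  -- the integer-valued vectors in `s → ℚ`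
  set Λ : Submodule ℤ ({x : U // x ∈ s} → ℚ) :=
    { carrier := {v | ∀ i, ∃ m : ℤ, v i = (m : ℚ)}
      add_mem' := by
        intro a b ha hb i
        obtain ⟨m, hm⟩ := ha i; obtain ⟨l, hl⟩ := hb i
        exact ⟨m + l, by simp [hm, hl]⟩
      zero_mem' := fun i => ⟨0, by simp⟩
      smul_mem' := by
        intro c a ha i
        obtain ⟨m, hm⟩ := ha i
        exact ⟨c * m, by simp [Pi.smul_apply, hm, ← Int.cast_smul_eq_zsmul ℚ]⟩ } with hΛ
  have hΛfg : Λ.FG := by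
    refine ⟨Finset.univ.image (fun i => Pi.single (M := fun _ => ℚ) i 1), le_antisymm ?_ ?_⟩
    · rw [Submodule.span_le]
      intro v hv
      simp only [Finset.coe_image, Set.mem_image] at hv
      obtain ⟨i, _, rfl⟩ := hv
      intro j
      by_cases h : i = j
      · subst h; exact ⟨1, by simp⟩
      · exact ⟨0, by simp [Pi.single_apply, h]⟩
    · intro v hv
      have : v = ∑ i : {x : U // x ∈ s}, Pi.single i (v i) :=
        (Finset.univ_sum_single v).symm
      rw [this]
      refine Submodule.sum_mem _ fun i _ => ?_
      obtain ⟨m, hm⟩ := hv i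
      have : Pi.single (M := fun _ => ℚ) i (v i) = m • Pi.single i 1 := by
        rw [hm, ← Pi.single_smul]
        norm_num
      rw [this]
      exact Submodule.smul_mem _ _ (Submodule.subset_span
        (by simp [Finset.coe_image]))
  haveI : IsNoetherian ℤ ↥Λ := isNoetherian_of_fg_of_noetherian _ hΛfg
  -- the evaluation map into `Λ`
  set Θ : U →ₗ[ℚ] ({x : U // x ∈ s} → ℚ) := LinearMap.pi (fun i => B.flip (i : U)) with hΘ
  have hmem : ∀ x : ↥(dualLat B S), Θ (x : U) ∈ Λ := by
    intro x i
    exact x.2 (i : U) (hs ▸ Submodule.subset_span i.2)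
  set g : ↥(dualLat B S) →ₗ[ℤ] ↥Λ :=
    LinearMap.codRestrict Λ ((Θ.restrictScalars ℤ).comp (dualLat B S).subtype) hmem with hgdef
  have hginj : Function.Injective g := by
    intro x y hxy
    have h1 : Θ (x : U) = Θ (y : U) := by
      have := congrArg (Subtype.val) hxy
      exact this
    have h2 : ∀ i : {x : U // x ∈ s}, B ((x : U) - (y : U)) (i : U) = 0 := by
      intro i
      have := congrFun h1 i
      simp only [hΘ, LinearMap.pi_apply, LinearMap.flip_apply] at this
      simp [map_sub, this]
    have h3 : ((x : U) - (y : U)) = 0 := by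
      refine hnd _ (fun y' => ?_)
      have hker : Submodule.span ℚ (s : Set U) ≤ LinearMap.ker (B ((x : U) - (y : U))) := by
        rw [Submodule.span_le]
        intro z hz
        exact LinearMap.mem_ker.2 (h2 ⟨z, hz⟩)
      have : y' ∈ LinearMap.ker (B ((x : U) - (y : U))) := by
        rw [hspan] at hker; exact hker trivial
      exact this
    ext
    exact sub_eq_zero.1 h3
  exact Module.Finite.of_injective g hginj

/-- `T/S` is finite for `S ≤ T` lattices with `S` full and `T` finitely generated. -/
lemma quot_finite [FiniteDimensional ℚ U] {S T : Submodule ℤ U} (hST : S ≤ T)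
    (hfull : Submodule.span ℚ (S : Set U) = ⊤) (hTfg : T.FG) :
    Finite (↥T ⧸ S.comap T.subtype) := by
  haveI : Module.Finite ℤ ↥T := (Module.Finite.iff_fg).2 hTfg
  haveI : Module.Finite ℤ (↥T ⧸ S.comap T.subtype) := Module.Finite.quotient ℤ _
  refine Module.finite_of_fg_torsion _ ?_
  intro x
  obtain ⟨t, rfl⟩ := Submodule.mkQ_surjective _ x
  have ht : (t : U) ∈ Submodule.span ℚ (S : Set U) := by rw [hfull]; trivial
  obtain ⟨d, hd, hdt⟩ := exists_int_smul_mem_spanInt ht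
  refine ⟨⟨d, mem_nonZeroDivisors_of_ne_zero hd⟩, ?_⟩
  have : d • t ∈ S.comap T.subtype := by
    simpa [Submodule.span_eq] using hdt
  calc (⟨d, _⟩ : nonZeroDivisors ℤ) • Submodule.mkQ _ t = Submodule.mkQ _ (d • t) := by
        simp
    _ = 0 := (Submodule.Quotient.mk_eq_zero _).2 this
end AuxB
section AuxC
open Submodule

/-- `ℚ/ℤ` as a `ℤ`-module. -/
abbrev QZ : Type := ℚ ⧸ (Submodule.span ℤ ({(1 : ℚ)} : Set ℚ))

lemma mem_zspan_iff {q : ℚ} :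
    q ∈ (Submodule.span ℤ ({(1 : ℚ)} : Set ℚ)) ↔ ∃ k : ℤ, (k : ℚ) = q := by
  simp [Submodule.mem_span_singleton, zsmul_eq_mul]

lemma card_hom_zmod (n : ℕ) (hn : 0 < n) : Nat.card (ZMod n →+ QZ) = n := by
  haveI : NeZero n := ⟨hn.ne'⟩
  have hne : (n : ℚ) ≠ 0 := by exact_mod_cast hn.ne'
  have e2 : {q : QZ // (n : ℤ) • q = 0} ≃ {f : ℤ →+ QZ // f (n : ℤ) = 0} := by
    refine Equiv.subtypeEquiv (zmultiplesHom QZ) (fun a => ?_)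
    simp [zmultiplesHom_apply]
  have e3 : (ZMod n →+ QZ) ≃ {q : QZ // (n : ℤ) • q = 0} :=
    ((ZMod.lift n (A := QZ)).symm.trans e2.symm)
  rw [Nat.card_congr e3]
  set T' : AddSubgroup QZ :=
    { carrier := {q | (n : ℤ) • q = 0}
      add_mem' := by intro a b ha hb; simp only [Set.mem_setOf_eq] at *
                     rw [smul_add, ha, hb, add_zero]
      zero_mem' := by simp
      neg_mem' := by intro a ha; simp only [Set.mem_setOf_eq] at *
                     rw [smul_neg, ha, neg_zero] } with hT'
  have hmem : ∀ m : ℤ, ((Submodule.Quotient.mk ((m : ℚ)/n) : QZ)) ∈ T' := by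
    intro m
    show (n : ℤ) • (Submodule.Quotient.mk ((m : ℚ)/n) : QZ) = 0
    rw [← Submodule.Quotient.mk_smul, Submodule.Quotient.mk_eq_zero]
    refine mem_zspan_iff.2 ⟨m, ?_⟩
    rw [zsmul_eq_mul]
    field_simp
    simp
  set F : ℤ →+ ↥T' :=
    { toFun := fun m => ⟨Submodule.Quotient.mk ((m : ℚ)/n), hmem m⟩
      map_zero' := by ext; simp
      map_add' := by
        intro a b
        ext
        show (Submodule.Quotient.mk (((a + b : ℤ) : ℚ)/n) : QZ) =
          Submodule.Quotient.mk ((a : ℚ)/n) + Submodule.Quotient.mk ((b : ℚ)/n)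
        rw [← Submodule.Quotient.mk_add]
        congr 1
        push_cast
        ring } with hF
  have hsurj : Function.Surjective F := by
    rintro ⟨q, hq⟩
    obtain ⟨r, rfl⟩ := Submodule.Quotient.mk_surjective _ q
    have : (n : ℤ) • (Submodule.Quotient.mk r : QZ) = 0 := hq
    rw [← Submodule.Quotient.mk_smul, Submodule.Quotient.mk_eq_zero] at this
    obtain ⟨k, hk⟩ := mem_zspan_iff.1 this
    rw [zsmul_eq_mul] at hk
    refine ⟨k, Subtype.ext ?_⟩
    show (Submodule.Quotient.mk ((k : ℚ)/n) : QZ) = Submodule.Quotient.mk r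
    congr 1
    field_simp [hk]
    simpa using hk
  have hker : F.ker = AddSubgroup.zmultiples (n : ℤ) := by
    ext m
    simp only [AddMonoidHom.mem_ker, hF, AddMonoidHom.coe_mk, ZeroHom.coe_mk]
    constructor
    · intro h
      have : (Submodule.Quotient.mk ((m : ℚ)/n) : QZ) = 0 := by
        simpa using congrArg Subtype.val h
      rw [Submodule.Quotient.mk_eq_zero] at this
      obtain ⟨k, hk⟩ := mem_zspan_iff.1 this
      refine AddSubgroup.mem_zmultiples_iff.2 ⟨k, ?_⟩
      have : (k : ℚ) * n = m := by field_simp at hk; linarith [hk]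
      rw [smul_eq_mul]
      exact_mod_cast this
    · intro h
      obtain ⟨k, hk⟩ := AddSubgroup.mem_zmultiples_iff.1 h
      refine Subtype.ext ?_
      show (Submodule.Quotient.mk ((m : ℚ)/n) : QZ) = 0
      rw [Submodule.Quotient.mk_eq_zero]
      refine mem_zspan_iff.2 ⟨k, ?_⟩
      rw [smul_eq_mul] at hk
      have : (k : ℚ) * n = m := by exact_mod_cast hk
      field_simp [← this]
      simpa using this
  have e5 : (ℤ ⧸ AddSubgroup.zmultiples (n : ℤ)) ≃+ ↥T' := by
    rw [← hker]
    exact QuotientAddGroup.quotientKerEquivOfSurjective F hsurj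
  have : Nat.card {q : QZ // (n : ℤ) • q = 0} = Nat.card ↥T' := rfl
  rw [this, ← Nat.card_congr e5.toEquiv,
    Nat.card_congr (Int.quotientZMultiplesNatEquivZMod n).toEquiv,
    Nat.card_eq_fintype_card, ZMod.card]
end AuxC
section AuxC2
open DirectSum

lemma card_addHom_eq (A : Type*) [AddCommGroup A] [Finite A] :
    Nat.card (A →+ QZ) = Nat.card A := by
  obtain ⟨ι, hι, n, hn, ⟨e⟩⟩ := AddCommGroup.equiv_directSum_zmod_of_finite' A
  classical
  have e1 : (A →+ QZ) ≃ ((⨁ i, ZMod (n i)) →+ QZ) :=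
    { toFun := fun f => f.comp e.symm.toAddMonoidHom
      invFun := fun g => g.comp e.toAddMonoidHom
      left_inv := fun f => by ext a; simp
      right_inv := fun g => by ext a; simp }
  have e2 : ((⨁ i, ZMod (n i)) →+ QZ) ≃ (Π i, ZMod (n i) →+ QZ) :=
    (DFinsupp.liftAddHom (β := fun i => ZMod (n i)) (γ := QZ)).symm.toEquiv
  have e3 : A ≃ Π i, ZMod (n i) := e.toEquiv.trans DFinsupp.equivFunOnFintype
  rw [Nat.card_congr e1, Nat.card_congr e2, Nat.card_pi, Nat.card_congr e3, Nat.card_pi]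
  refine Finset.prod_congr rfl fun i _ => ?_
  haveI : NeZero (n i) := ⟨by have := hn i; omega⟩
  rw [card_hom_zmod (n i) (by have := hn i; omega), Nat.card_eq_fintype_card, ZMod.card]

lemma card_linHom_eq (A : Type*) [AddCommGroup A] [I : Module ℤ A] [Finite A] :
    Nat.card (A →ₗ[ℤ] QZ) = Nat.card A := by
  obtain rfl : I = AddCommGroup.toIntModule A :=
    @Subsingleton.elim _ (AddCommGroup.uniqueIntModule (M := A)).instSubsingleton _ _
  rw [← card_addHom_eq A]
  exact (Nat.card_congr (addMonoidHomLequivInt (A := A) (B := QZ) ℤ).toEquiv).symm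
end AuxC2
section AuxD
open Submodule

variable {U : Type*} [AddCommGroup U] [Module ℚ U] [FiniteDimensional ℚ U]

/-- Solving `B x ⬝ = f'` on a full lattice `T`. -/
lemma exists_pairing_vector (B : U →ₗ[ℚ] U →ₗ[ℚ] ℚ)
    (hnd : ∀ x : U, (∀ y, B x y = 0) → x = 0)
    {T : Submodule ℤ U} (hTfull : Submodule.span ℚ (T : Set U) = ⊤)
    (f' : ↥T →ₗ[ℤ] ℚ) : ∃ x : U, ∀ t : ↥T, B x ↑t = f' t := by
  obtain ⟨b, hbT, hbspan, hbli⟩ := exists_linearIndependent ℚ (T : Set U)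
  rw [hTfull] at hbspan
  have hbtop : ⊤ ≤ Submodule.span ℚ (Set.range (Subtype.val : b → U)) := by
    rw [Subtype.range_coe]; exact hbspan.ge
  let β : Module.Basis b ℚ U := Module.Basis.mk hbli hbtop
  let c : U →ₗ[ℚ] ℚ := β.constr ℚ (fun i => f' ⟨i.1, hbT i.2⟩)
  have hBinj : Function.Injective B := by
    intro x y hxy
    have : ∀ z, B (x - y) z = 0 := fun z => by
      rw [map_sub, LinearMap.sub_apply, hxy, sub_self]
    exact sub_eq_zero.1 (hnd _ this)
  have hBsurj : Function.Surjective B :=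
    (LinearMap.injective_iff_surjective_of_finrank_eq_finrank
      (Subspace.dual_finrank_eq (V := U)).symm).1 hBinj
  obtain ⟨x, hx⟩ := hBsurj c
  refine ⟨x, fun t => ?_⟩
  -- agreement on the ℤ-span of the basis
  have step1 : ∀ u : U, u ∈ Submodule.span ℤ b → ∀ h : u ∈ T, B x u = f' ⟨u, h⟩ := by
    intro u hu
    induction hu using Submodule.span_induction with
    | mem y hy =>
        intro h
        have h1 : B x y = c y := by rw [hx]
        have h2 : c y = f' ⟨y, hbT hy⟩ := by
          have := β.constr_basis ℚ (fun i => f' ⟨i.1, hbT i.2⟩) ⟨y, hy⟩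
          simpa [β, Module.Basis.mk_apply] using this
        rw [h1, h2]
    | zero =>
        intro h
        have : (⟨0, h⟩ : ↥T) = 0 := rfl
        rw [this, map_zero, map_zero]
    | add y z hy hz ihy ihz =>
        intro h
        have hyT : y ∈ T := by
          have := Submodule.span_le.2 (show b ⊆ (T : Set U) from hbT) hy; exact this
        have hzT : z ∈ T := by
          have := Submodule.span_le.2 (show b ⊆ (T : Set U) from hbT) hz; exact this
        have : (⟨y + z, h⟩ : ↥T) = ⟨y, hyT⟩ + ⟨z, hzT⟩ := rfl
        rw [this, map_add, map_add, ihy hyT, ihz hzT]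
    | smul a y hy ihy =>
        intro h
        have hyT : y ∈ T := by
          have := Submodule.span_le.2 (show b ⊆ (T : Set U) from hbT) hy; exact this
        have heq : (⟨a • y, h⟩ : ↥T) = a • ⟨y, hyT⟩ := rfl
        have l1 : B x (a • y) = (a : ℚ) * (B x y) := by
          rw [← Int.cast_smul_eq_zsmul ℚ a y, map_smul, smul_eq_mul]
        have l2 : f' (a • (⟨y, hyT⟩ : ↥T)) = (a : ℚ) * f' ⟨y, hyT⟩ := by
          rw [map_smul, ← Int.cast_smul_eq_zsmul ℚ, smul_eq_mul]
        rw [heq, l1, l2, ihy hyT]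
  -- pass to all of `T` by clearing denominators
  have htb : (t : U) ∈ Submodule.span ℚ b := by
    rw [hbspan]; trivial
  obtain ⟨d, hd, hdt⟩ := exists_int_smul_mem_spanInt htb
  have hdT : d • (t : U) ∈ T := T.smul_mem d t.2
  have h1 : B x (d • (t : U)) = f' ⟨d • (t : U), hdT⟩ := step1 _ hdt hdT
  have l1 : B x (d • (t : U)) = (d : ℚ) * B x ↑t := by
    rw [← Int.cast_smul_eq_zsmul ℚ d ((t : U)), map_smul, smul_eq_mul]
  have l2 : f' ⟨d • (t : U), hdT⟩ = (d : ℚ) * f' t := by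
    rw [show (⟨d • (t : U), hdT⟩ : ↥T) = d • t from rfl, map_smul,
      ← Int.cast_smul_eq_zsmul ℚ, smul_eq_mul]
  rw [l1, l2] at h1
  exact mul_left_cancel₀ (Int.cast_ne_zero.2 hd) h1

end AuxD
section AuxD2
open Submodule

variable {U : Type*} [AddCommGroup U] [Module ℚ U] [FiniteDimensional ℚ U]

/-- The main duality: `[dualLat S : dualLat T] = [T : S]`. -/
lemma duality_card (B : U →ₗ[ℚ] U →ₗ[ℚ] ℚ)
    (hnd : ∀ x : U, (∀ y, B x y = 0) → x = 0)
    {S T : Submodule ℤ U} (hST : S ≤ T) (hTdual : T ≤ dualLat B S)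
    (hSfg : S.FG) (hfull : Submodule.span ℚ (S : Set U) = ⊤) :
    Nat.card (↥(dualLat B S) ⧸ (dualLat B T).comap (dualLat B S).subtype) =
    Nat.card (↥T ⧸ S.comap T.subtype) := by
  haveI hDfin : Module.Finite ℤ ↥(dualLat B S) := dualLat_finite B hnd hSfg hfull
  haveI : IsNoetherian ℤ ↥(dualLat B S) := isNoetherian_of_isNoetherianRing_of_finite ℤ _
  haveI hTfin : Module.Finite ℤ ↥T :=
    Module.Finite.of_injective (Submodule.inclusion hTdual) (Submodule.inclusion_injective _)
  have hTfg : T.FG := Module.Finite.iff_fg.1 hTfin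
  haveI hQfin : Finite (↥T ⧸ S.comap T.subtype) := quot_finite hST hfull hTfg
  haveI : NoZeroSMulDivisors ℤ ↥T := by
    constructor
    intro c x h
    by_cases hc : c = 0
    · exact Or.inl hc
    · refine Or.inr (Subtype.ext ?_)
      have h0 : c • (x : U) = 0 := by
        have := congrArg (Subtype.val) h; simpa using this
      rw [← Int.cast_smul_eq_zsmul ℚ c (x : U)] at h0
      rcases smul_eq_zero.1 h0 with h' | h'
      · exact absurd h' (Int.cast_ne_zero.2 hc)
      · exact h'
  haveI : Module.Free ℤ ↥T := Module.free_of_finite_type_torsion_free'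
  set S' : Submodule ℤ ↥T := S.comap T.subtype with hS'
  set Zs : Submodule ℤ ℚ := Submodule.span ℤ ({(1 : ℚ)} : Set ℚ) with hZs
  have hvanish : ∀ x : ↥(dualLat B S), S' ≤ LinearMap.ker
      (Zs.mkQ.comp ((((B (x : U)).restrictScalars ℤ)).comp T.subtype)) := by
    intro x s hs
    obtain ⟨k, hk⟩ := x.2 (s : U) hs
    simp only [LinearMap.mem_ker, LinearMap.comp_apply, Submodule.coe_subtype,
      LinearMap.coe_restrictScalars, Submodule.mkQ_apply]
    exact (Submodule.Quotient.mk_eq_zero _).2 (mem_zspan_iff.2 ⟨k, hk.symm⟩)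
  set Φ : ↥(dualLat B S) →ₗ[ℤ] ((↥T ⧸ S') →ₗ[ℤ] QZ) :=
    { toFun := fun x => S'.liftQ _ (hvanish x)
      map_add' := by
        intro x y
        refine Submodule.linearMap_qext _ ?_
        ext t
        simp only [LinearMap.comp_apply, Submodule.mkQ_apply, Submodule.liftQ_apply,
          LinearMap.add_apply, Submodule.coe_subtype, LinearMap.coe_restrictScalars]
        rw [show ((x + y : ↥(dualLat B S)) : U) = (x : U) + (y : U) from rfl, map_add]
        simp [Submodule.Quotient.mk_add]
      map_smul' := by
        intro c x
        refine Submodule.linearMap_qext _ ?_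
        ext t
        simp only [LinearMap.comp_apply, Submodule.mkQ_apply, Submodule.liftQ_apply,
          LinearMap.smul_apply, RingHom.id_apply, Submodule.coe_subtype,
          LinearMap.coe_restrictScalars]
        rw [show ((c • x : ↥(dualLat B S)) : U) = c • (x : U) from rfl,
          ← Int.cast_smul_eq_zsmul ℚ c (x : U), map_smul]
        simp [Submodule.Quotient.mk_smul]
        rw [← Submodule.Quotient.mk_smul]
        congr 1 } with hΦ
  have happly : ∀ (x : ↥(dualLat B S)) (t : ↥T),
      Φ x (S'.mkQ t) = Zs.mkQ (B (x : U) (t : U)) := by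
    intro x t
    simp [hΦ, Submodule.liftQ_apply]
  have hker : LinearMap.ker Φ = (dualLat B T).comap (dualLat B S).subtype := by
    ext x
    simp only [LinearMap.mem_ker, Submodule.mem_comap, Submodule.coe_subtype]
    constructor
    · intro h t ht
      have h1 : Φ x (S'.mkQ ⟨t, ht⟩) = 0 := by rw [h]; rfl
      rw [happly] at h1
      obtain ⟨k, hk⟩ := mem_zspan_iff.1 ((Submodule.Quotient.mk_eq_zero _).1 h1)
      exact ⟨k, hk.symm⟩
    · intro h
      refine Submodule.linearMap_qext _ ?_
      ext t
      obtain ⟨k, hk⟩ := h (t : U) t.2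
      simp only [LinearMap.comp_apply, Submodule.mkQ_apply, LinearMap.zero_comp,
        LinearMap.zero_apply]
      have := happly x t
      rw [Submodule.mkQ_apply] at this
      rw [this, Submodule.mkQ_apply, Submodule.Quotient.mk_eq_zero]
      exact mem_zspan_iff.2 ⟨k, hk.symm⟩
  have hsurj : Function.Surjective Φ := by
    intro F
    obtain ⟨f', hf'⟩ := Module.projective_lifting_property Zs.mkQ (F.comp S'.mkQ)
      (Submodule.mkQ_surjective _)
    have hTfull : Submodule.span ℚ (T : Set U) = ⊤ := by
      refine le_antisymm le_top ?_
      rw [← hfull]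
      exact Submodule.span_mono hST
    obtain ⟨x, hxT⟩ := exists_pairing_vector B hnd hTfull f'
    have hxdual : x ∈ dualLat B S := by
      intro m hm
      have h0 : F (S'.mkQ ⟨m, hST hm⟩) = 0 := by
        rw [show S'.mkQ ⟨m, hST hm⟩ = 0 from
          (Submodule.Quotient.mk_eq_zero _).2 (by exact hm), map_zero]
      have h1 : Zs.mkQ (f' ⟨m, hST hm⟩) = 0 := by
        have h2 := congrArg (fun g : ↥T →ₗ[ℤ] QZ => g ⟨m, hST hm⟩) hf'
        simp only [LinearMap.comp_apply] at h2
        rw [h2]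
        exact h0
      obtain ⟨k, hk⟩ := mem_zspan_iff.1 ((Submodule.Quotient.mk_eq_zero _).1 h1)
      exact ⟨k, by rw [hxT ⟨m, hST hm⟩, ← hk]⟩
    refine ⟨⟨x, hxdual⟩, ?_⟩
    refine Submodule.linearMap_qext _ ?_
    ext t
    simp only [LinearMap.comp_apply, Submodule.mkQ_apply]
    have h3 := happly ⟨x, hxdual⟩ t
    rw [Submodule.mkQ_apply] at h3
    rw [h3]
    have h4 := congrArg (fun g : ↥T →ₗ[ℤ] QZ => g t) hf'
    simp only [LinearMap.comp_apply] at h4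
    rw [Submodule.mkQ_apply] at h4
    rw [show ((⟨x, hxdual⟩ : ↥(dualLat B S)) : U) = x from rfl, hxT t]
    exact h4
  have e := LinearMap.quotKerEquivOfSurjective Φ hsurj
  rw [← hker, Nat.card_congr e.toEquiv]
  exact card_linHom_eq _
end AuxD2
section AuxE
open Submodule

variable {V W : Type*} [AddCommGroup V] [Module ℚ V] [AddCommGroup W] [Module ℚ W]

lemma prodForm_apply (BV : V →ₗ[ℚ] V →ₗ[ℚ] ℚ) (BW : W →ₗ[ℚ] W →ₗ[ℚ] ℚ) (z w : V × W) :
    prodForm BV BW z w = BV z.1 w.1 + BW z.2 w.2 := rfl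

lemma prodForm_nondeg (BV : V →ₗ[ℚ] V →ₗ[ℚ] ℚ) (BW : W →ₗ[ℚ] W →ₗ[ℚ] ℚ)
    (hBVnd : ∀ x : V, (∀ y, BV x y = 0) → x = 0)
    (hBWnd : ∀ x : W, (∀ y, BW x y = 0) → x = 0) :
    ∀ z : V × W, (∀ y, prodForm BV BW z y = 0) → z = 0 := by
  intro z h
  have h1 : z.1 = 0 := by
    refine hBVnd z.1 (fun y => ?_)
    have := h (y, 0)
    simpa [prodForm_apply] using this
  have h2 : z.2 = 0 := by
    refine hBWnd z.2 (fun y => ?_)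
    have := h (0, y)
    simpa [prodForm_apply] using this
  exact Prod.ext h1 h2

lemma dualLat_prod (BV : V →ₗ[ℚ] V →ₗ[ℚ] ℚ) (BW : W →ₗ[ℚ] W →ₗ[ℚ] ℚ)
    (M : Submodule ℤ V) (N : Submodule ℤ W) :
    dualLat (prodForm BV BW) (M.prod N) = (dualLat BV M).prod (dualLat BW N) := by
  ext z
  constructor
  · intro hz
    constructor
    · intro m hm
      obtain ⟨k, hk⟩ := hz (m, 0) ⟨hm, N.zero_mem⟩
      exact ⟨k, by simpa [prodForm_apply] using hk⟩
    · intro n hn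
      obtain ⟨k, hk⟩ := hz (0, n) ⟨M.zero_mem, hn⟩
      exact ⟨k, by simpa [prodForm_apply] using hk⟩
  · rintro ⟨h1, h2⟩ p hp
    obtain ⟨k1, hk1⟩ := h1 p.1 hp.1
    obtain ⟨k2, hk2⟩ := h2 p.2 hp.2
    exact ⟨k1 + k2, by rw [prodForm_apply, hk1, hk2]; push_cast; ring⟩

lemma span_prod_top {M : Submodule ℤ V} {N : Submodule ℤ W}
    (hM : Submodule.span ℚ (M : Set V) = ⊤) (hN : Submodule.span ℚ (N : Set W) = ⊤) :
    Submodule.span ℚ ((M.prod N : Submodule ℤ (V × W)) : Set (V × W)) = ⊤ := by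
  refine le_antisymm le_top ?_
  rintro ⟨v, w⟩ -
  have hv : (v, (0 : W)) ∈ Submodule.span ℚ ((M.prod N : Submodule ℤ (V × W)) : Set (V × W)) := by
    have : v ∈ Submodule.span ℚ (M : Set V) := by rw [hM]; trivial
    have hmap := Submodule.map_span (LinearMap.inl ℚ V W) (M : Set V)
    have : (LinearMap.inl ℚ V W) v ∈ Submodule.map (LinearMap.inl ℚ V W)
        (Submodule.span ℚ (M : Set V)) := Submodule.mem_map_of_mem this
    rw [hmap] at this
    refine Submodule.span_mono ?_ this
    rintro p ⟨m, hm, rfl⟩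
    exact ⟨hm, N.zero_mem⟩
  have hw : ((0 : V), w) ∈ Submodule.span ℚ ((M.prod N : Submodule ℤ (V × W)) : Set (V × W)) := by
    have : w ∈ Submodule.span ℚ (N : Set W) := by rw [hN]; trivial
    have hmap := Submodule.map_span (LinearMap.inr ℚ V W) (N : Set W)
    have : (LinearMap.inr ℚ V W) w ∈ Submodule.map (LinearMap.inr ℚ V W)
        (Submodule.span ℚ (N : Set W)) := Submodule.mem_map_of_mem this
    rw [hmap] at this
    refine Submodule.span_mono ?_ this
    rintro p ⟨n, hn, rfl⟩
    exact ⟨M.zero_mem, hn⟩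
  have := Submodule.add_mem _ hv hw
  simpa using this

lemma card_quot_prod (BV : V →ₗ[ℚ] V →ₗ[ℚ] ℚ) (BW : W →ₗ[ℚ] W →ₗ[ℚ] ℚ)
    (M : Submodule ℤ V) (N : Submodule ℤ W) :
    Nat.card (↥((dualLat BV M).prod (dualLat BW N)) ⧸
        (M.prod N).comap ((dualLat BV M).prod (dualLat BW N)).subtype) =
    Nat.card (discQuot BV M) * Nat.card (discQuot BW N) := by
  set P := (dualLat BV M).prod (dualLat BW N) with hP
  set F : ↥P →ₗ[ℤ] (discQuot BV M × discQuot BW N) :=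
    { toFun := fun x => (Submodule.Quotient.mk ⟨x.1.1, x.2.1⟩,
        Submodule.Quotient.mk ⟨x.1.2, x.2.2⟩)
      map_add' := by
        intro x y
        refine Prod.ext ?_ ?_ <;>
          simp only [← Submodule.Quotient.mk_add, Prod.fst_add, Prod.snd_add] <;> rfl
      map_smul' := by
        intro c x
        refine Prod.ext ?_ ?_ <;>
          simp only [← Submodule.Quotient.mk_smul, RingHom.id_apply, Prod.smul_fst,
            Prod.smul_snd] <;> rfl } with hF
  have hsurj : Function.Surjective F := by
    rintro ⟨q1, q2⟩
    obtain ⟨a, rfl⟩ := Submodule.Quotient.mk_surjective _ q1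
    obtain ⟨b, rfl⟩ := Submodule.Quotient.mk_surjective _ q2
    exact ⟨⟨(a.1, b.1), ⟨a.2, b.2⟩⟩, rfl⟩
  have hker : LinearMap.ker F = (M.prod N).comap P.subtype := by
    ext x
    simp only [LinearMap.mem_ker, Submodule.mem_comap, hF, LinearMap.coe_mk,
      AddHom.coe_mk, Prod.ext_iff, Prod.fst_zero, Prod.snd_zero,
      Submodule.Quotient.mk_eq_zero, Submodule.mem_comap, Submodule.coe_subtype]
    exact Iff.rfl
  rw [← Nat.card_prod]
  rw [← Nat.card_congr (LinearMap.quotKerEquivOfSurjective F hsurj).toEquiv, hker]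
end AuxE
/-- Primitive extension along a glue map: let `M`, `N` be even `ℤ`-lattices with an
anti-isometry `φ : H_M → H_N` between subgroups of their discriminant groups, and let
`L_φ ⊆ M^∨ ⊕ N^∨` be the preimage of the graph of `φ`.  Then `L_φ` is an even integral
lattice containing `M ⊥ N`, both `M` and `N` are primitive in `L_φ`, and
`|det L_φ| · [L_φ : M ⊥ N]² = |det M| · |det N|`. -/
theorem primitive_extension_of_glue_map
    (V W : Type*) [AddCommGroup V] [Module ℚ V] [AddCommGroup W] [Module ℚ W]
    [FiniteDimensional ℚ V] [FiniteDimensional ℚ W]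
    (BV : V →ₗ[ℚ] V →ₗ[ℚ] ℚ) (BW : W →ₗ[ℚ] W →ₗ[ℚ] ℚ)
    (hBVsymm : ∀ x y, BV x y = BV y x) (hBWsymm : ∀ x y, BW x y = BW y x)
    (hBVnd : ∀ x : V, (∀ y, BV x y = 0) → x = 0)
    (hBWnd : ∀ x : W, (∀ y, BW x y = 0) → x = 0)
    (M : Submodule ℤ V) (N : Submodule ℤ W)
    (hMfg : M.FG) (hNfg : N.FG)
    (hMfull : Submodule.span ℚ (M : Set V) = ⊤)
    (hNfull : Submodule.span ℚ (N : Set W) = ⊤)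
    (hMeven : ∀ m ∈ M, ∃ k : ℤ, BV m m = 2 * (k : ℚ))
    (hNeven : ∀ n ∈ N, ∃ k : ℤ, BW n n = 2 * (k : ℚ))
    (hMint : M ≤ dualLat BV M) (hNint : N ≤ dualLat BW N)
    (HM : Submodule ℤ (discQuot BV M)) (HN : Submodule ℤ (discQuot BW N))
    (φ : ↥HM ≃ₗ[ℤ] ↥HN)
    -- `φ` is an anti-isometry: `q_M(x) = -q_N(φ(x))` in `ℚ/2ℤ`
    (hanti : ∀ (x : ↥(dualLat BV M)) (y : ↥(dualLat BW N))
      (hx : (Submodule.Quotient.mk x : discQuot BV M) ∈ HM),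
      (↑(φ ⟨Submodule.Quotient.mk x, hx⟩) : discQuot BW N) = Submodule.Quotient.mk y →
      ∃ k : ℤ, BV x x + BW y y = 2 * (k : ℚ))
    (Lphi : Set (V × W))
    (hLphi : Lphi = {z : V × W |
      ∃ (x : ↥(dualLat BV M)) (y : ↥(dualLat BW N))
        (hx : (Submodule.Quotient.mk x : discQuot BV M) ∈ HM),
        (↑(φ ⟨Submodule.Quotient.mk x, hx⟩) : discQuot BW N) = Submodule.Quotient.mk y ∧
          z = ((x : V), (y : W))}) :
    -- `L_φ` is integral
    (∀ z ∈ Lphi, ∀ z' ∈ Lphi, ∃ k : ℤ, BV z.1 z'.1 + BW z.2 z'.2 = (k : ℚ)) ∧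
      -- `L_φ` is even
      (∀ z ∈ Lphi, ∃ k : ℤ, BV z.1 z.1 + BW z.2 z.2 = 2 * (k : ℚ)) ∧
      -- `L_φ` contains `M ⊥ N`
      (∀ m ∈ M, ∀ n ∈ N, ((m : V), (n : W)) ∈ Lphi) ∧
      -- `M` and `N` are primitive in `L_φ`
      (∀ z ∈ Lphi, z.2 = 0 → z.1 ∈ M) ∧ (∀ z ∈ Lphi, z.1 = 0 → z.2 ∈ N) ∧
      -- `|det L_φ| · [L_φ : M ⊥ N]² = |det M| · |det N|`
      (∀ Lsub : Submodule ℤ (V × W), Lsub = Submodule.span ℤ Lphi →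
        Nat.card (↥(dualLat (prodForm BV BW) Lsub) ⧸
            Lsub.comap (dualLat (prodForm BV BW) Lsub).subtype) *
          Nat.card (↥Lsub ⧸ (M.prod N).comap Lsub.subtype) ^ 2 =
        Nat.card (discQuot BV M) * Nat.card (discQuot BW N)) := by

  classical
  -- `Lphi` is a submodule
  have hzero : (0 : V × W) ∈ Lphi := by
    rw [hLphi]
    have h0 : (Submodule.Quotient.mk (0 : ↥(dualLat BV M)) : discQuot BV M) ∈ HM := by
      rw [Submodule.Quotient.mk_zero]; exact HM.zero_mem
    refine ⟨0, 0, h0, ?_, rfl⟩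
    have : (⟨Submodule.Quotient.mk (0 : ↥(dualLat BV M)), h0⟩ : ↥HM) = 0 :=
      Subtype.ext (Submodule.Quotient.mk_zero _)
    rw [this, map_zero]
    simp [Submodule.Quotient.mk_zero]
  have hadd : ∀ z ∈ Lphi, ∀ z' ∈ Lphi, z + z' ∈ Lphi := by
    intro z hz z' hz'
    rw [hLphi] at hz hz' ⊢
    obtain ⟨x, y, hx, heq, rfl⟩ := hz
    obtain ⟨x', y', hx', heq', rfl⟩ := hz'
    have hxa : (Submodule.Quotient.mk (x + x') : discQuot BV M) ∈ HM := by
      rw [Submodule.Quotient.mk_add]; exact HM.add_mem hx hx'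
    refine ⟨x + x', y + y', hxa, ?_, by simp⟩
    have h1 : (⟨Submodule.Quotient.mk (x + x'), hxa⟩ : ↥HM) =
        ⟨Submodule.Quotient.mk x, hx⟩ + ⟨Submodule.Quotient.mk x', hx'⟩ :=
      Subtype.ext (by simp [Submodule.Quotient.mk_add])
    rw [h1, map_add]
    have : ((φ (⟨Submodule.Quotient.mk x, hx⟩ : ↥HM) +
        φ (⟨Submodule.Quotient.mk x', hx'⟩ : ↥HM) : ↥HN) : discQuot BW N) =
        (↑(φ ⟨Submodule.Quotient.mk x, hx⟩) : discQuot BW N) +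
        (↑(φ ⟨Submodule.Quotient.mk x', hx'⟩) : discQuot BW N) := rfl
    rw [this, heq, heq', Submodule.Quotient.mk_add]
  have hsmul : ∀ (c : ℤ), ∀ z ∈ Lphi, c • z ∈ Lphi := by
    intro c z hz
    rw [hLphi] at hz ⊢
    obtain ⟨x, y, hx, heq, rfl⟩ := hz
    have hxc : (Submodule.Quotient.mk (c • x) : discQuot BV M) ∈ HM := by
      rw [Submodule.Quotient.mk_smul]; exact HM.smul_mem c hx
    refine ⟨c • x, c • y, hxc, ?_, by simp⟩
    have h1 : (⟨Submodule.Quotient.mk (c • x), hxc⟩ : ↥HM) =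
        c • ⟨Submodule.Quotient.mk x, hx⟩ :=
      Subtype.ext (by simp [Submodule.Quotient.mk_smul])
    rw [h1, map_smul]
    have : ((c • φ (⟨Submodule.Quotient.mk x, hx⟩ : ↥HM) : ↥HN) : discQuot BW N) =
        c • (↑(φ ⟨Submodule.Quotient.mk x, hx⟩) : discQuot BW N) := rfl
    rw [this, heq, Submodule.Quotient.mk_smul]
  set LphiM : Submodule ℤ (V × W) :=
    { carrier := Lphi
      add_mem' := fun ha hb => hadd _ ha _ hb
      zero_mem' := hzero
      smul_mem' := fun c z hz => hsmul c z hz } with hLphiM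
  -- evenness
  have heven : ∀ z ∈ Lphi, ∃ k : ℤ, BV z.1 z.1 + BW z.2 z.2 = 2 * (k : ℚ) := by
    intro z hz
    rw [hLphi] at hz
    obtain ⟨x, y, hx, heq, rfl⟩ := hz
    exact hanti x y hx heq
  -- integrality
  have hint : ∀ z ∈ Lphi, ∀ z' ∈ Lphi, ∃ k : ℤ, BV z.1 z'.1 + BW z.2 z'.2 = (k : ℚ) := by
    intro z hz z' hz'
    obtain ⟨k1, h1⟩ := heven z hz
    obtain ⟨k2, h2⟩ := heven z' hz'
    obtain ⟨k12, h12⟩ := heven (z + z') (hadd z hz z' hz')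
    refine ⟨k12 - k1 - k2, ?_⟩
    have e1 : BV (z + z').1 (z + z').1 = BV z.1 z.1 + 2 * BV z.1 z'.1 + BV z'.1 z'.1 := by
      simp only [Prod.fst_add, map_add, LinearMap.add_apply]
      rw [hBVsymm z'.1 z.1]; ring
    have e2 : BW (z + z').2 (z + z').2 = BW z.2 z.2 + 2 * BW z.2 z'.2 + BW z'.2 z'.2 := by
      simp only [Prod.snd_add, map_add, LinearMap.add_apply]
      rw [hBWsymm z'.2 z.2]; ring
    rw [e1, e2] at h12
    push_cast
    linarith
  -- contains M ⊥ N
  have hcontain : ∀ m ∈ M, ∀ n ∈ N, ((m : V), (n : W)) ∈ Lphi := by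
    intro m hm n hn
    rw [hLphi]
    have hx0 : (Submodule.Quotient.mk (⟨m, hMint hm⟩ : ↥(dualLat BV M)) : discQuot BV M) = 0 :=
      (Submodule.Quotient.mk_eq_zero _).2 (by exact hm)
    have hx : (Submodule.Quotient.mk (⟨m, hMint hm⟩ : ↥(dualLat BV M)) : discQuot BV M) ∈ HM := by
      rw [hx0]; exact HM.zero_mem
    refine ⟨⟨m, hMint hm⟩, ⟨n, hNint hn⟩, hx, ?_, rfl⟩
    have h1 : (⟨Submodule.Quotient.mk (⟨m, hMint hm⟩ : ↥(dualLat BV M)), hx⟩ : ↥HM) = 0 :=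
      Subtype.ext hx0
    rw [h1, map_zero]
    have h2 : (Submodule.Quotient.mk (⟨n, hNint hn⟩ : ↥(dualLat BW N)) : discQuot BW N) = 0 :=
      (Submodule.Quotient.mk_eq_zero _).2 (by exact hn)
    rw [h2]
    rfl
  -- primitivity
  have hprim1 : ∀ z ∈ Lphi, z.2 = 0 → z.1 ∈ M := by
    intro z hz h2
    rw [hLphi] at hz
    obtain ⟨x, y, hx, heq, rfl⟩ := hz
    have hy0 : y = 0 := Subtype.ext h2
    have : φ ⟨Submodule.Quotient.mk x, hx⟩ = 0 := by
      refine Subtype.ext ?_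
      rw [heq, hy0, Submodule.Quotient.mk_zero]
      rfl
    have hx0 : (⟨Submodule.Quotient.mk x, hx⟩ : ↥HM) = 0 := by
      apply φ.injective
      rw [this, map_zero]
    have hmkx : (Submodule.Quotient.mk x : discQuot BV M) = 0 := by
      have := congrArg Subtype.val hx0
      simpa using this
    have hxM : x ∈ M.comap (dualLat BV M).subtype := (Submodule.Quotient.mk_eq_zero _).1 hmkx
    exact hxM
  have hprim2 : ∀ z ∈ Lphi, z.1 = 0 → z.2 ∈ N := by
    intro z hz h1
    rw [hLphi] at hz
    obtain ⟨x, y, hx, heq, rfl⟩ := hz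
    have hx0 : x = 0 := Subtype.ext h1
    have hmkx : (Submodule.Quotient.mk x : discQuot BV M) = 0 := by
      rw [hx0, Submodule.Quotient.mk_zero]
    have hmk0 : (⟨Submodule.Quotient.mk x, hx⟩ : ↥HM) = 0 := Subtype.ext (by simpa using hmkx)
    have hmky : (Submodule.Quotient.mk y : discQuot BW N) = 0 := by
      rw [← heq, hmk0, map_zero]
      rfl
    have hyN : y ∈ N.comap (dualLat BW N).subtype := (Submodule.Quotient.mk_eq_zero _).1 hmky
    exact hyN
  refine ⟨hint, heven, hcontain, hprim1, hprim2, ?_⟩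
  -- the determinant identity
  intro Lsub hLsub
  set B' := prodForm BV BW with hB'
  set S := M.prod N with hS
  have hnd' := prodForm_nondeg BV BW hBVnd hBWnd
  have hSfg : S.FG := hMfg.prod hNfg
  have hfull' : Submodule.span ℚ (S : Set (V × W)) = ⊤ := span_prod_top hMfull hNfull
  have hPdef : dualLat B' S = (dualLat BV M).prod (dualLat BW N) := dualLat_prod BV BW M N
  set P := dualLat B' S with hP
  set D := dualLat B' Lsub with hD
  -- the chain S ≤ Lsub ≤ D ≤ P
  have hSL : S ≤ Lsub := by
    rw [hLsub]
    rintro ⟨v, w⟩ ⟨hv, hw⟩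
    exact Submodule.subset_span (hcontain v hv w hw)
  have hLD : Lsub ≤ D := by
    have hsub : Lphi ⊆ (D : Set (V × W)) := by
      intro z hz m hm
      rw [hLsub] at hm
      induction hm using Submodule.span_induction with
      | mem m' hm' => exact hint z hz m' hm'
      | zero => exact ⟨0, by simp⟩
      | add a b _ _ ha hb =>
          obtain ⟨k1, hk1⟩ := ha
          obtain ⟨k2, hk2⟩ := hb
          exact ⟨k1 + k2, by rw [map_add, hk1, hk2]; push_cast; ring⟩
      | smul c a _ ha =>
          obtain ⟨k, hk⟩ := ha
          refine ⟨c * k, ?_⟩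
          rw [← Int.cast_smul_eq_zsmul ℚ c a, map_smul, smul_eq_mul, hk]
          push_cast; ring
    rw [hLsub]
    exact Submodule.span_le.2 hsub
  have hDP : D ≤ P := dualLat_antitone B' hSL
  have hLP : Lsub ≤ P := le_trans hLD hDP
  -- cardinality of the big quotient
  have cardP : Nat.card (↥P ⧸ S.comap P.subtype) =
      Nat.card (discQuot BV M) * Nat.card (discQuot BW N) := by
    have h := card_quot_prod BV BW M N
    rw [← hPdef] at h
    rw [hS]
    exact h
  -- duality
  have hdual : Nat.card (↥P ⧸ D.comap P.subtype) =
      Nat.card (↥Lsub ⧸ S.comap Lsub.subtype) :=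
    duality_card B' hnd' hSL hLP hSfg hfull'
  -- two towers
  have t1 := card_quot_tower (S.comap P.subtype) (D.comap P.subtype)
    (Submodule.comap_mono (le_trans hSL hLD))
  have f1 := card_quot_comap_eq S D P hDP
  have t2 := card_quot_tower (S.comap D.subtype) (Lsub.comap D.subtype)
    (Submodule.comap_mono hSL)
  have f2 := card_quot_comap_eq S Lsub D hLD
  rw [f1] at t1
  rw [f2] at t2
  rw [t2] at t1
  rw [hdual] at t1
  rw [t1] at cardP
  rw [← cardP]
  ring
end

section
/- Let M, N be even ℤ-lattices, f_M ∈ O(M), f_N ∈ O(N) isometries, and φ: H_M → H_N an anti-isometry of subgroups of the discriminant groups with L_φ the associated primitive extension. Then the isometry f_M ⊕ f_N of M ⊥ N extends to an isometry of L_φ if and only if φ ∘ D_{f_M} = D_{f_N} ∘ φ, where D_f denotes the induced automorphism of the discriminant group. -/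
lemma mem_dualLat {V : Type*} [AddCommGroup V] [Module ℚ V]
    {B : V →ₗ[ℚ] V →ₗ[ℚ] ℚ} {M : Submodule ℤ V} {x : V} :
    x ∈ dualLat B M ↔ ∀ m ∈ M, ∃ k : ℤ, B x m = (k : ℚ) := Iff.rfl

lemma discQuot_finite {V : Type*} [AddCommGroup V] [Module ℚ V] [FiniteDimensional ℚ V]
    (B : V →ₗ[ℚ] V →ₗ[ℚ] ℚ)
    (hnd : ∀ x : V, (∀ y, B x y = 0) → x = 0)
    (M : Submodule ℤ V) (hfull : Submodule.span ℚ (M : Set V) = ⊤) :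
    Finite (discQuot B M) := by
  classical
  obtain ⟨t, hts, hsp, hli⟩ := exists_linearIndependent ℚ (M : Set V)
  have htfin : t.Finite := hli.setFinite
  haveI := htfin.to_subtype
  let b : Module.Basis t ℚ V := Module.Basis.mk hli (by rw [Subtype.range_coe, hsp, hfull])
  have hBnd : LinearMap.BilinForm.Nondegenerate B :=
    LinearMap.BilinForm.Nondegenerate.ofSeparatingLeft hnd
  have hrange : Set.range ⇑b = t := by rw [Module.Basis.coe_mk, Subtype.range_coe]
  -- dual lattice is contained in the span of the dual basis
  set P : Submodule ℤ V :=
    Submodule.span ℤ (Set.range <| LinearMap.BilinForm.dualBasis B hBnd b) with hP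
  have hle : dualLat B M ≤ P := by
    rw [hP, ← LinearMap.BilinForm.dualSubmodule_span_of_basis _ hBnd b]
    intro x hx y hy
    have hyM : y ∈ M := by
      have : Submodule.span ℤ (Set.range ⇑b) ≤ M := by
        rw [Submodule.span_le, hrange]; exact hts
      exact this hy
    obtain ⟨k, hk⟩ := hx y hyM
    exact Submodule.mem_one.mpr ⟨k, by simpa using hk.symm⟩
  have hPfg : P.FG := Submodule.fg_span (Set.finite_range _)
  haveI : IsNoetherian ℤ ↥P := isNoetherian_of_fg_of_noetherian _ hPfg
  have hfg : (dualLat B M).FG := by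
    have h1 : ((dualLat B M).comap P.subtype).FG := IsNoetherian.noetherian _
    have h2 := h1.map P.subtype
    rwa [Submodule.map_comap_subtype, inf_eq_right.mpr hle] at h2
  haveI : Module.Finite ℤ ↥(dualLat B M) := Module.Finite.iff_fg.mpr hfg
  haveI : Module.Finite ℤ (discQuot B M) := Module.Finite.quotient ℤ _
  -- torsion
  have htors : ∀ x : V, ∃ d : ℤ, d ≠ 0 ∧ d • x ∈ M := by
    intro x
    have hx : x ∈ Submodule.span ℚ (M : Set V) := by rw [hfull]; trivial
    induction hx using Submodule.span_induction with
    | mem u hu => exact ⟨1, one_ne_zero, by simpa using hu⟩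
    | zero => exact ⟨1, one_ne_zero, by simp⟩
    | add u v _ _ hu hv =>
      obtain ⟨d, hd, hdu⟩ := hu
      obtain ⟨e, he, hev⟩ := hv
      refine ⟨d * e, mul_ne_zero hd he, ?_⟩
      have : (d * e) • (u + v) = e • (d • u) + d • (e • v) := by
        rw [smul_add]; rw [smul_smul, smul_smul]; ring_nf
      rw [this]
      exact add_mem (M.smul_mem e hdu) (M.smul_mem d hev)
    | smul q u _ hu =>
      obtain ⟨d, hd, hdu⟩ := hu
      refine ⟨(q.den : ℤ) * d, mul_ne_zero (by exact_mod_cast q.den_ne_zero) hd, ?_⟩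
      have : ((q.den : ℤ) * d) • (q • u) = q.num • (d • u) := by
        rw [← Int.cast_smul_eq_zsmul ℚ ((q.den : ℤ) * d), ← Int.cast_smul_eq_zsmul ℚ q.num,
          ← Int.cast_smul_eq_zsmul ℚ d, smul_smul, smul_smul]
        congr 1
        push_cast
        linear_combination (d : ℚ) * Rat.mul_den_eq_num q
      rw [this]
      exact M.smul_mem _ hdu
  have hT : Module.IsTorsion ℤ (discQuot B M) := by
    intro q
    obtain ⟨x, rfl⟩ := Submodule.Quotient.mk_surjective _ q
    obtain ⟨d, hd, hdx⟩ := htors (x : V)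
    refine ⟨⟨d, mem_nonZeroDivisors_of_ne_zero hd⟩, ?_⟩
    show d • (Submodule.Quotient.mk x : discQuot B M) = 0
    rw [← Submodule.Quotient.mk_smul (M.comap (dualLat B M).subtype) d x,
        Submodule.Quotient.mk_eq_zero]
    simpa using hdx
  exact Module.finite_of_fg_torsion _ hT

lemma mk_eq_mk {V : Type*} [AddCommGroup V] [Module ℚ V]
    {B : V →ₗ[ℚ] V →ₗ[ℚ] ℚ} {M : Submodule ℤ V} {x y : ↥(dualLat B M)} :
    (Submodule.Quotient.mk x : discQuot B M) = Submodule.Quotient.mk y ↔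
      (x : V) - (y : V) ∈ M := by
  rw [Submodule.Quotient.eq]
  simp [Submodule.mem_comap]

lemma dual_stab {V : Type*} [AddCommGroup V] [Module ℚ V]
    (B : V →ₗ[ℚ] V →ₗ[ℚ] ℚ) (M : Submodule ℤ V) (f : V ≃ₗ[ℚ] V)
    (hf : ∀ x y, B (f x) (f y) = B x y) (hfM : ∀ x : V, x ∈ M ↔ f x ∈ M) :
    ∀ x : V, x ∈ dualLat B M ↔ f x ∈ dualLat B M := by
  intro x
  constructor
  · intro hx m hm
    have hm' : f.symm m ∈ M := (hfM _).mpr (by rwa [LinearEquiv.apply_symm_apply])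
    obtain ⟨k, hk⟩ := hx _ hm'
    refine ⟨k, ?_⟩
    have h2 := hf x (f.symm m)
    rwa [LinearEquiv.apply_symm_apply, hk] at h2
  · intro hx m hm
    have hm' : f m ∈ M := (hfM m).mp hm
    obtain ⟨k, hk⟩ := hx _ hm'
    exact ⟨k, by rwa [hf] at hk⟩


/-- Equivariant glue: let `M`, `N` be even `ℤ`-lattices with isometries `f_M`, `f_N`
(realized as ambient isometries preserving the lattices), and `φ : H_M → H_N` an
anti-isometry of subgroups of the discriminant groups with associated primitive extension
`L_φ`.  Then `f_M ⊕ f_N` extends to an isometry of `L_φ` if and only if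
`φ ∘ D_{f_M} = D_{f_N} ∘ φ`. -/
theorem glue_map_equivariant_iff
    (V W : Type*) [AddCommGroup V] [Module ℚ V] [AddCommGroup W] [Module ℚ W]
    [FiniteDimensional ℚ V] [FiniteDimensional ℚ W]
    (BV : V →ₗ[ℚ] V →ₗ[ℚ] ℚ) (BW : W →ₗ[ℚ] W →ₗ[ℚ] ℚ)
    (hBVsymm : ∀ x y, BV x y = BV y x) (hBWsymm : ∀ x y, BW x y = BW y x)
    (hBVnd : ∀ x : V, (∀ y, BV x y = 0) → x = 0)
    (hBWnd : ∀ x : W, (∀ y, BW x y = 0) → x = 0)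
    (M : Submodule ℤ V) (N : Submodule ℤ W)
    (hMfg : M.FG) (hNfg : N.FG)
    (hMfull : Submodule.span ℚ (M : Set V) = ⊤)
    (hNfull : Submodule.span ℚ (N : Set W) = ⊤)
    (hMeven : ∀ m ∈ M, ∃ k : ℤ, BV m m = 2 * (k : ℚ))
    (hNeven : ∀ n ∈ N, ∃ k : ℤ, BW n n = 2 * (k : ℚ))
    (hMint : M ≤ dualLat BV M) (hNint : N ≤ dualLat BW N)
    (HM : Submodule ℤ (discQuot BV M)) (HN : Submodule ℤ (discQuot BW N))
    (φ : ↥HM ≃ₗ[ℤ] ↥HN)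
    (hanti : ∀ (x : ↥(dualLat BV M)) (y : ↥(dualLat BW N))
      (hx : (Submodule.Quotient.mk x : discQuot BV M) ∈ HM),
      (↑(φ ⟨Submodule.Quotient.mk x, hx⟩) : discQuot BW N) = Submodule.Quotient.mk y →
      ∃ k : ℤ, BV x x + BW y y = 2 * (k : ℚ))
    (Lphi : Set (V × W))
    (hLphi : Lphi = {z : V × W |
      ∃ (x : ↥(dualLat BV M)) (y : ↥(dualLat BW N))
        (hx : (Submodule.Quotient.mk x : discQuot BV M) ∈ HM),
        (↑(φ ⟨Submodule.Quotient.mk x, hx⟩) : discQuot BW N) = Submodule.Quotient.mk y ∧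
          z = ((x : V), (y : W))})
    -- the isometries `f_M` of `M` and `f_N` of `N`
    (fV : V ≃ₗ[ℚ] V) (fW : W ≃ₗ[ℚ] W)
    (hfV : ∀ x y, BV (fV x) (fV y) = BV x y) (hfW : ∀ x y, BW (fW x) (fW y) = BW x y)
    (hfVM : ∀ x : V, x ∈ M ↔ fV x ∈ M) (hfWN : ∀ x : W, x ∈ N ↔ fW x ∈ N) :
    -- `f_M ⊕ f_N` restricts to an isometry of `L_φ` …
    (∀ z : V × W, z ∈ Lphi ↔ (fV z.1, fW z.2) ∈ Lphi) ↔
      -- … if and only if the glue map is equivariant: `φ ∘ D_{f_M} = D_{f_N} ∘ φ`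
      (∀ (x : ↥(dualLat BV M)) (hx : (Submodule.Quotient.mk x : discQuot BV M) ∈ HM)
        (y : ↥(dualLat BW N)),
        (↑(φ ⟨Submodule.Quotient.mk x, hx⟩) : discQuot BW N) = Submodule.Quotient.mk y →
        ∀ (x₂ : ↥(dualLat BV M)) (y₂ : ↥(dualLat BW N)),
          (x₂ : V) = fV x → (y₂ : W) = fW y →
          ∃ hx₂ : (Submodule.Quotient.mk x₂ : discQuot BV M) ∈ HM,
            (↑(φ ⟨Submodule.Quotient.mk x₂, hx₂⟩) : discQuot BW N) =
              Submodule.Quotient.mk y₂) := by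
  constructor
  · -- stability of L_φ implies equivariance
    intro hL x hx y hy x₂ y₂ hx₂v hy₂v
    have hz : ((x : V), (y : W)) ∈ Lphi := by
      rw [hLphi]; exact ⟨x, y, hx, hy, rfl⟩
    have h2 := (hL ((x : V), (y : W))).mp hz
    rw [hLphi] at h2
    obtain ⟨a, b, ha, hab, heq⟩ := h2
    have hxa : x₂ = a := Subtype.ext (by rw [hx₂v]; exact congrArg Prod.fst heq)
    have hyb : y₂ = b := Subtype.ext (by rw [hy₂v]; exact congrArg Prod.snd heq)
    subst hxa; subst hyb
    exact ⟨ha, hab⟩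
  · -- equivariance implies stability of L_φ
    intro Heq
    haveI hfinM : Finite (discQuot BV M) := discQuot_finite BV hBVnd M hMfull
    haveI : Finite ↥HM := Subtype.finite
    have hfVd := dual_stab BV M fV hfV hfVM
    have hfWd := dual_stab BW N fW hfW hfWN
    -- the induced map `D_{f_M}` restricted to `H_M`
    have hDex : ∀ h : ↥HM, ∃ h' : ↥HM, ∃ x x₂ : ↥(dualLat BV M),
        Submodule.Quotient.mk x = (h : discQuot BV M) ∧ (x₂ : V) = fV x ∧
        (h' : discQuot BV M) = Submodule.Quotient.mk x₂ := by
      intro h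
      obtain ⟨x, hxh⟩ := Submodule.Quotient.mk_surjective _ (h : discQuot BV M)
      have hxm : (Submodule.Quotient.mk x : discQuot BV M) ∈ HM := by rw [hxh]; exact h.2
      obtain ⟨y, hy⟩ :=
        Submodule.Quotient.mk_surjective _ ((φ ⟨_, hxm⟩ : ↥HN) : discQuot BW N)
      obtain ⟨hx₂, -⟩ := Heq x hxm y hy.symm ⟨fV x, (hfVd _).mp x.2⟩
        ⟨fW y, (hfWd _).mp y.2⟩ rfl rfl
      exact ⟨⟨_, hx₂⟩, x, ⟨fV x, (hfVd _).mp x.2⟩, hxh, rfl, rfl⟩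
    choose D xof x2of hmk hval hD using hDex
    have hinj : Function.Injective D := by
      intro h h' hDh
      have h1 : (Submodule.Quotient.mk (x2of h) : discQuot BV M)
          = Submodule.Quotient.mk (x2of h') := by
        rw [← hD h, ← hD h', hDh]
      rw [mk_eq_mk] at h1
      have h2 : (xof h : V) - xof h' ∈ M := by
        apply (hfVM _).mpr
        rwa [map_sub, ← hval h, ← hval h']
      apply Subtype.ext
      rw [← hmk h, ← hmk h']
      exact mk_eq_mk.mpr h2
    have hsurj := Finite.injective_iff_surjective.mp hinj
    intro z
    rw [hLphi]
    constructor
    · rintro ⟨x, y, hx, hy, rfl⟩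
      obtain ⟨hx₂, hphi⟩ := Heq x hx y hy ⟨fV x, (hfVd _).mp x.2⟩
        ⟨fW y, (hfWd _).mp y.2⟩ rfl rfl
      exact ⟨_, _, hx₂, hphi, rfl⟩
    · rintro ⟨a, b, ha, hab, hz⟩
      have ha1 : (a : V) = fV z.1 := (congrArg Prod.fst hz).symm
      have hb1 : (b : W) = fW z.2 := (congrArg Prod.snd hz).symm
      have hz1d : z.1 ∈ dualLat BV M := (hfVd z.1).mpr (ha1 ▸ a.2)
      have hz2d : z.2 ∈ dualLat BW N := (hfWd z.2).mpr (hb1 ▸ b.2)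
      obtain ⟨h, hh⟩ := hsurj ⟨Submodule.Quotient.mk a, ha⟩
      have h1 : (Submodule.Quotient.mk (x2of h) : discQuot BV M)
          = Submodule.Quotient.mk a := by
        rw [← hD h, hh]
      have h2 : (xof h : V) - z.1 ∈ M := by
        apply (hfVM _).mpr
        rw [map_sub, ← hval h, ← ha1]
        exact mk_eq_mk.mp h1
      have hx : (Submodule.Quotient.mk (⟨z.1, hz1d⟩ : ↥(dualLat BV M))
          : discQuot BV M) ∈ HM := by
        have h3 : (Submodule.Quotient.mk (⟨z.1, hz1d⟩ : ↥(dualLat BV M))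
            : discQuot BV M) = (h : discQuot BV M) := by
          rw [← hmk h]
          refine mk_eq_mk.mpr ?_
          simpa using M.neg_mem h2
        rw [h3]; exact h.2
      obtain ⟨y, hy⟩ :=
        Submodule.Quotient.mk_surjective _ ((φ ⟨_, hx⟩ : ↥HN) : discQuot BW N)
      obtain ⟨hx₂, hphi2⟩ := Heq ⟨z.1, hz1d⟩ hx y hy.symm a
        ⟨fW y, (hfWd _).mp y.2⟩ ha1 rfl
      have h3 : (Submodule.Quotient.mk (⟨fW y, (hfWd _).mp y.2⟩ : ↥(dualLat BW N))
          : discQuot BW N) = Submodule.Quotient.mk b := hphi2.symm.trans hab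
      have h4 : (y : W) - z.2 ∈ N := by
        apply (hfWN _).mpr
        rw [map_sub, ← hb1]
        simpa using mk_eq_mk.mp h3
      refine ⟨⟨z.1, hz1d⟩, ⟨z.2, hz2d⟩, hx, ?_, rfl⟩
      rw [← hy]
      exact mk_eq_mk.mpr h4
end

section
/- Let L be a hermitian 𝒪-lattice over a local field with L ⊆ L^∨ := 𝔇_{E/F}^{-1}L^♯ and with even trace form (𝔫(L) ⊆ 𝔇_{K/F}^{-1}). Define the torsion quadratic form q̄: L^∨/L → K/𝔇_{K/F}^{-1} by q̄([x]) = [h(x,x)] and the torsion hermitian form h̄: (L^∨/L)² → E/𝔇_{E/F}^{-1} by h̄([x],[y]) = [h(x,y)]. Then every 𝒪-linear automorphism g of L^∨/L preserving q̄ also preserves h̄. -/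
/-- In a quadratic extension with involution `ι` whose fixed points are the base field,
the trace of `z` is `z + ι z`. -/
lemma aux_trace_eq_add_conj
    (K : Type*) [Field K] (E : Type*) [CommRing E] [Algebra K E]
    [Module.Finite K E] [Module.Free K E]
    (hquad : Module.finrank K E = 2)
    (ι : E ≃ₐ[K] E) (hinv : ∀ z, ι (ι z) = z)
    (hfix : ∀ z : E, ι z = z → ∃ a : K, algebraMap K E a = z) :
    ∀ z : E, algebraMap K E (Algebra.trace K E z) = z + ι z := by
  have hnt : Nontrivial E := by
    by_contra hn
    rw [not_nontrivial_iff_subsingleton] at hn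
    have : Module.finrank K E = 0 := Module.finrank_zero_of_subsingleton
    omega
  have hinj : Function.Injective (algebraMap K E) := (algebraMap K E).injective
  obtain ⟨θ, hθ⟩ : ∃ θ : E, θ ∉ Set.range (algebraMap K E) := by
    by_contra hn
    push_neg at hn
    have hr : LinearMap.range (Algebra.linearMap K E) = ⊤ := by
      rw [Submodule.eq_top_iff']
      intro z
      obtain ⟨a, ha⟩ := hn z
      exact ⟨a, ha⟩
    have h1 : Module.finrank K E ≤ 1 := by
      have h2 := LinearMap.finrank_range_le (Algebra.linearMap K E)
      rw [hr, finrank_top, Module.finrank_self] at h2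
      exact h2
    omega
  have li : LinearIndependent K ![(1 : E), θ] := by
    rw [LinearIndependent.pair_iff]
    intro s t hst
    have ht : t = 0 := by
      by_contra ht
      refine hθ ⟨-(t⁻¹ * s), ?_⟩
      have h1 : s • (1 : E) = -(t • θ) := eq_neg_of_add_eq_zero_left hst
      rw [Algebra.algebraMap_eq_smul_one, neg_smul, mul_smul, h1, smul_neg, neg_neg,
        smul_smul, inv_mul_cancel₀ ht, one_smul]
    have hs : s = 0 := by
      rw [ht, zero_smul, add_zero] at hst
      apply hinj
      rw [map_zero, Algebra.algebraMap_eq_smul_one]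
      exact hst
    exact ⟨hs, ht⟩
  let b := basisOfLinearIndependentOfCardEqFinrank li (by simp [hquad])
  have hb : ⇑b = ![(1 : E), θ] := coe_basisOfLinearIndependentOfCardEqFinrank li _
  have hb0 : b 0 = 1 := by rw [hb]; rfl
  have hb1 : b 1 = θ := by rw [hb]; rfl
  obtain ⟨s, hs⟩ := hfix (θ + ι θ) (by rw [map_add, hinv, add_comm])
  obtain ⟨n, hn⟩ := hfix (θ * ι θ) (by rw [map_mul, hinv, mul_comm])
  have hθθ : θ * θ = (-n) • b 0 + s • b 1 := by
    rw [hb0, hb1, Algebra.smul_def, Algebra.smul_def, mul_one, map_neg, hn, hs]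
    ring
  have htrθ : Algebra.trace K E θ = s := by
    classical
    have h0 : θ * b 0 = b 1 := by rw [hb0, hb1, mul_one]
    have h1 : θ * b 1 = (-n) • b 0 + s • b 1 := by
      conv_lhs => rw [hb1]
      exact hθθ
    rw [Algebra.trace_eq_matrix_trace b θ, Matrix.trace, Fin.sum_univ_two]
    simp [Matrix.diag, Algebra.leftMulMatrix_eq_repr_mul, h0, h1, Module.Basis.repr_self,
      Finsupp.single_apply]
  have key : (Algebra.linearMap K E).comp (Algebra.trace K E)
      = LinearMap.id + ι.toLinearMap := by
    apply b.ext
    intro i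
    fin_cases i
    · show algebraMap K E (Algebra.trace K E (b 0)) = b 0 + ι (b 0)
      rw [hb0, show (1 : E) = algebraMap K E 1 from (map_one _).symm,
        Algebra.trace_algebraMap, hquad, AlgEquiv.commutes]
      simp [two_smul]
    · show algebraMap K E (Algebra.trace K E (b 1)) = b 1 + ι (b 1)
      rw [hb1, htrθ, hs]
  intro z
  have hz := LinearMap.congr_fun key z
  simpa using hz

/-- Let `(L, h)` be a hermitian `𝒪`-lattice over a local field (`K` finite over `F = ℚ_p`,
`E` étale quadratic over `K`) with `L ⊆ L^∨ = 𝔇_{E/F}^{-1}L^♯` and even trace form, and let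
`q̄ : L^∨/L → K/𝔇_{K/F}^{-1}`, `q̄([x]) = [h(x,x)]`, and
`h̄ : (L^∨/L)² → E/𝔇_{E/F}^{-1}`, `h̄([x],[y]) = [h(x,y)]`, be the torsion quadratic and
hermitian forms on the discriminant group.  Then every `𝒪`-linear automorphism `g` of
`L^∨/L` preserving `q̄` also preserves `h̄`. -/
theorem discriminant_quadratic_preserving_is_hermitian_preserving
    (p : ℕ) [Fact p.Prime]
    (K : Type*) [Field K] [Algebra ℚ_[p] K] [FiniteDimensional ℚ_[p] K]
    [Algebra ℤ_[p] K] [IsScalarTower ℤ_[p] ℚ_[p] K]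
    (E : Type*) [CommRing E] [Algebra K E] [Algebra ℚ_[p] E] [IsScalarTower ℚ_[p] K E]
    [Algebra ℤ_[p] E] [IsScalarTower ℤ_[p] K E] [Module.Finite K E] [Module.Free K E]
    [Module.Finite ℚ_[p] E]
    (hquad : Module.finrank K E = 2)
    (ι : E ≃ₐ[K] E) (hinv : ∀ z, ι (ι z) = z)
    (hfix : ∀ z : E, ι z = z → ∃ a : K, algebraMap K E a = z)
    (hetale : ∀ z : E, z ≠ 0 → ∃ w : E, Algebra.trace K E (z * w) ≠ 0)
    (V : Type*) [AddCommGroup V] [Module E V] [Module ℤ_[p] V] [IsScalarTower ℤ_[p] E V]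
    (h : V → V → E)
    (hadd : ∀ x y z : V, h (x + y) z = h x z + h y z)
    (hsmul : ∀ (e : E) (x y : V), h (e • x) y = e * h x y)
    (hconj : ∀ x y : V, h x y = ι (h y x))
    (hnd : ∀ x : V, (∀ y, h x y = 0) → x = 0)
    (L : Submodule ℤ_[p] V)
    (hOL : ∀ c ∈ integralClosure ℤ_[p] E, ∀ x ∈ L, c • x ∈ L)
    (hfull : Submodule.span E (L : Set V) = ⊤)
    (hfg : L.FG)
    -- the trace form on `L` is even, i.e. `𝔫(L) ⊆ 𝔇_{K/F}^{-1}`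
    (heven : ∀ v ∈ L, ∃ a : K, algebraMap K E a = h v v ∧
      ∀ u ∈ integralClosure ℤ_[p] K,
        ∃ k : ℤ_[p], Algebra.trace ℚ_[p] K (a * u) = algebraMap ℤ_[p] ℚ_[p] k)
    -- `L^∨ = 𝔇_{E/F}^{-1} L^♯`, realized as the dual of the trace form
    (Ldual : Submodule ℤ_[p] V)
    (hLdual : ∀ x : V, x ∈ Ldual ↔ ∀ y ∈ L, ∃ c : ℤ_[p],
      Algebra.trace ℚ_[p] E (h x y) = algebraMap ℤ_[p] ℚ_[p] c)
    (hLle : L ≤ Ldual)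
    (g : (↥Ldual ⧸ L.comap Ldual.subtype) ≃ₗ[ℤ_[p]] (↥Ldual ⧸ L.comap Ldual.subtype))
    -- `g` is `𝒪`-linear
    (hgO : ∀ c ∈ integralClosure ℤ_[p] E, ∀ x x' : Ldual, (x' : V) = c • (x : V) →
      ∀ y y' : Ldual, g (Submodule.Quotient.mk x) = Submodule.Quotient.mk y →
        g (Submodule.Quotient.mk x') = Submodule.Quotient.mk y' →
        (y' : V) - c • (y : V) ∈ L)
    -- `g` preserves the torsion quadratic form `q̄` valued in `K/𝔇_{K/F}^{-1}`
    (hgq : ∀ x y : Ldual, g (Submodule.Quotient.mk x) = Submodule.Quotient.mk y →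
      ∃ a : K, algebraMap K E a = h (y : V) (y : V) - h (x : V) (x : V) ∧
        ∀ u ∈ integralClosure ℤ_[p] K,
          ∃ k : ℤ_[p], Algebra.trace ℚ_[p] K (a * u) = algebraMap ℤ_[p] ℚ_[p] k) :
    -- `g` preserves the torsion hermitian form `h̄` valued in `E/𝔇_{E/F}^{-1}`
    ∀ x x' y y' : Ldual, g (Submodule.Quotient.mk x) = Submodule.Quotient.mk y →
      g (Submodule.Quotient.mk x') = Submodule.Quotient.mk y' →
      ∀ c ∈ integralClosure ℤ_[p] E,
        ∃ k : ℤ_[p], Algebra.trace ℚ_[p] E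
            ((h (y : V) (y' : V) - h (x : V) (x' : V)) * c) =
          algebraMap ℤ_[p] ℚ_[p] k := by
  intro x x' y y' hgx hgx' c hc
  have hnt : Nontrivial E := by
    by_contra hn
    rw [not_nontrivial_iff_subsingleton] at hn
    have : Module.finrank K E = 0 := Module.finrank_zero_of_subsingleton
    omega
  have hinj : Function.Injective (algebraMap K E) := (algebraMap K E).injective
  have keyfun : ∀ z : E, algebraMap K E (Algebra.trace K E z) = z + ι z :=
    aux_trace_eq_add_conj K E hquad ι hinv hfix
  -- ι preserves the integral closure
  have hιint : ∀ d ∈ integralClosure ℤ_[p] E, ι d ∈ integralClosure ℤ_[p] E := by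
    intro d hd
    have hd' : IsIntegral ℤ_[p] d := hd
    exact hd'.map (AlgEquiv.restrictScalars ℤ_[p] ι).toAlgHom
  -- `c • x ∈ Ldual`
  have hcx : c • (x : V) ∈ Ldual := by
    rw [hLdual]
    intro m hm
    obtain ⟨k, hk⟩ := (hLdual x).mp x.2 _ (hOL _ (hιint c hc) m hm)
    refine ⟨k, ?_⟩
    rw [← hk]
    congr 1
    rw [hsmul]
    conv_rhs => rw [hconj, hsmul, map_mul, hinv, ← hconj]
  set cx : Ldual := ⟨c • (x : V), hcx⟩ with hcxdef
  obtain ⟨ycx, hycx⟩ := Submodule.Quotient.mk_surjective _ (g (Submodule.Quotient.mk cx))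
  have hgcx : g (Submodule.Quotient.mk cx) = Submodule.Quotient.mk ycx := hycx.symm
  have hw : (ycx : V) - c • (y : V) ∈ L := hgO c hc x cx rfl y ycx hgx hgcx
  have hgadd : g (Submodule.Quotient.mk (cx + x')) = Submodule.Quotient.mk (ycx + y') := by
    rw [Submodule.Quotient.mk_add, map_add, hgcx, hgx', Submodule.Quotient.mk_add]
  obtain ⟨a₁, ha₁, ha₁'⟩ := hgq (cx + x') (ycx + y') hgadd
  obtain ⟨a₂, ha₂, ha₂'⟩ := hgq cx ycx hgcx
  obtain ⟨a₃, ha₃, ha₃'⟩ := hgq x' y' hgx'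
  -- additivity of `h` in the second slot
  have hadd₂ : ∀ u v w : V, h u (v + w) = h u v + h u w := by
    intro u v w
    rw [hconj, hadd, map_add, ← hconj, ← hconj]
  -- polarization identity for the relative trace
  have hpol : ∀ u v : V,
      algebraMap K E (Algebra.trace K E (h u v)) = h (u + v) (u + v) - h u u - h v v := by
    intro u v
    rw [keyfun, ← hconj v u, hadd, hadd₂, hadd₂]
    ring
  have hKtrace : Algebra.trace K E (h (ycx : V) (y' : V))
      - Algebra.trace K E (h (c • (x : V)) (x' : V)) = a₁ - a₂ - a₃ := by
    apply hinj
    rw [map_sub, hpol, hpol, map_sub, map_sub, ha₁, ha₂, ha₃]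
    have hc1 : ((cx + x' : Ldual) : V) = c • (x : V) + (x' : V) := rfl
    have hc2 : ((ycx + y' : Ldual) : V) = (ycx : V) + (y' : V) := rfl
    have hc3 : (cx : V) = c • (x : V) := rfl
    rw [hc1, hc2, hc3]
    ring
  -- trace transitivity
  have htrans : ∀ z : E,
      Algebra.trace ℚ_[p] E z = Algebra.trace ℚ_[p] K (Algebra.trace K E z) :=
    fun z => (Algebra.trace_trace z).symm
  -- trace is ι-invariant
  have hιtr : ∀ z : E, Algebra.trace ℚ_[p] E (ι z) = Algebra.trace ℚ_[p] E z := fun z =>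
    Algebra.trace_eq_of_algEquiv (AlgEquiv.restrictScalars ℚ_[p] ι) z
  set w : V := (ycx : V) - c • (y : V) with hwdef
  obtain ⟨kw, hkw⟩ := (hLdual (y' : V)).mp y'.2 w hw
  have hwtr : Algebra.trace ℚ_[p] E (h w (y' : V)) = algebraMap ℤ_[p] ℚ_[p] kw := by
    rw [hconj, hιtr, hkw]
  obtain ⟨k₁, hk₁⟩ := ha₁' 1 (one_mem _)
  obtain ⟨k₂, hk₂⟩ := ha₂' 1 (one_mem _)
  obtain ⟨k₃, hk₃⟩ := ha₃' 1 (one_mem _)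
  rw [mul_one] at hk₁ hk₂ hk₃
  refine ⟨k₁ - k₂ - k₃ - kw, ?_⟩
  have hexp : (h (y : V) (y' : V) - h (x : V) (x' : V)) * c
      = (h (ycx : V) (y' : V) - h (c • (x : V)) (x' : V)) - h w (y' : V) := by
    have h1 : h (ycx : V) (y' : V) = c * h (y : V) (y' : V) + h w (y' : V) := by
      have h2 : (ycx : V) = c • (y : V) + w := by rw [hwdef]; abel
      rw [h2, hadd, hsmul]
    rw [h1, hsmul]
    ring
  have hmain : Algebra.trace ℚ_[p] E (h (ycx : V) (y' : V) - h (c • (x : V)) (x' : V))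
      = algebraMap ℤ_[p] ℚ_[p] (k₁ - k₂ - k₃) := by
    rw [map_sub, htrans, htrans, ← map_sub (Algebra.trace ℚ_[p] K), hKtrace,
      map_sub, map_sub, hk₁, hk₂, hk₃, ← map_sub, ← map_sub]
  rw [hexp, map_sub, hwtr, hmain, ← map_sub]
end

section
/- Let L be a hermitian 𝒪-lattice over a local field with even trace form, let S_{s,σ} be a symmetry with s ∈ 𝔓^{i+a}L where 𝔰(L) = 𝔓^i and 𝔇_{E/F} = 𝔓^a. If 𝔓^{2i+a} ⊆ σ𝒪 then S_{s,σ} ∈ U^♯(L), i.e., (S_{s,σ} - id)(L^∨) ⊆ L. -/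
/-- Hermitian Miranda–Morrison: let `(L, h)` be a hermitian `𝒪`-lattice with even trace
form over an étale quadratic algebra `E` over a local field `K` (finite over `ℚ_p`), with
scale `𝔰(L) = 𝔓^i` and different `𝔇_{E/F} = 𝔓^a`.  If `S_{s,σ}` is a symmetry with
`s ∈ 𝔓^{i+a}L = 𝔰(L)𝔇_{E/F}L` and `𝔓^{2i+a} = 𝔰(L)²𝔇_{E/F} ⊆ σ𝒪`, then
`S_{s,σ} ∈ U^♯(L)`, i.e. `(S_{s,σ} - id)(L^∨) ⊆ L`. -/
theorem symmetry_mem_kernel_of_scale_condition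
    (p : ℕ) [Fact p.Prime]
    (K : Type*) [Field K] [Algebra ℚ_[p] K] [FiniteDimensional ℚ_[p] K]
    [Algebra ℤ_[p] K] [IsScalarTower ℤ_[p] ℚ_[p] K]
    (E : Type*) [CommRing E] [Algebra K E] [Algebra ℚ_[p] E] [IsScalarTower ℚ_[p] K E]
    [Algebra ℤ_[p] E] [IsScalarTower ℤ_[p] K E] [Module.Finite K E] [Module.Free K E]
    [Module.Finite ℚ_[p] E]
    (hquad : Module.finrank K E = 2)
    (ι : E ≃ₐ[K] E) (hinv : ∀ z, ι (ι z) = z)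
    (hfix : ∀ z : E, ι z = z → ∃ a : K, algebraMap K E a = z)
    (hetale : ∀ z : E, z ≠ 0 → ∃ w : E, Algebra.trace K E (z * w) ≠ 0)
    (V : Type*) [AddCommGroup V] [Module E V]
    (h : V → V → E)
    (hadd : ∀ x y z : V, h (x + y) z = h x z + h y z)
    (hsmul : ∀ (e : E) (x y : V), h (e • x) y = e * h x y)
    (hconj : ∀ x y : V, h x y = ι (h y x))
    (hnd : ∀ x : V, (∀ y, h x y = 0) → x = 0)
    (L : AddSubgroup V)
    (hOL : ∀ c ∈ integralClosure ℤ_[p] E, ∀ x ∈ L, c • x ∈ L)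
    -- the trace form on `L` is even, i.e. `𝔫(L) ⊆ 𝔇_{K/F}^{-1}`
    (heven : ∀ x ∈ L, ∃ a : K, algebraMap K E a = h x x ∧
      ∀ u ∈ integralClosure ℤ_[p] K,
        ∃ k : ℤ_[p], Algebra.trace ℚ_[p] K (a * u) = algebraMap ℤ_[p] ℚ_[p] k)
    (s : V) (σ : E) (hσ : IsUnit σ) (htr : σ + ι σ = h s s)
    -- `s ∈ 𝔓^{i+a} L`, i.e. `s ∈ 𝔰(L)·𝔇_{E/F}·L`
    (hs : s ∈ AddSubgroup.closure {w : V | ∃ y ∈ L, ∃ y' ∈ L,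
      ∃ d : E, (∀ e : E, (∀ c ∈ integralClosure ℤ_[p] E,
          ∃ k : ℤ_[p], Algebra.trace ℚ_[p] E (e * c) = algebraMap ℤ_[p] ℚ_[p] k) →
        d * e ∈ integralClosure ℤ_[p] E) ∧
      ∃ z ∈ L, w = (h y y' * d) • z})
    -- `𝔓^{2i+a} ⊆ σ𝒪`, i.e. `𝔰(L)²·𝔇_{E/F} ⊆ σ𝒪`
    (hσdvd : ∀ y ∈ L, ∀ y' ∈ L, ∀ u ∈ L, ∀ u' ∈ L,
      ∀ d : E, (∀ e : E, (∀ c ∈ integralClosure ℤ_[p] E,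
          ∃ k : ℤ_[p], Algebra.trace ℚ_[p] E (e * c) = algebraMap ℤ_[p] ℚ_[p] k) →
        d * e ∈ integralClosure ℤ_[p] E) →
      ∃ c ∈ integralClosure ℤ_[p] E, h y y' * h u u' * d = σ * c)
    (S : V →ₗ[E] V)
    (hS : ∀ x, S x = x - (h x s * Ring.inverse σ) • s) :
    ∀ x : V, (∀ y ∈ L, ∃ c : ℤ_[p],
        Algebra.trace ℚ_[p] E (h x y) = algebraMap ℤ_[p] ℚ_[p] c) →
      S x - x ∈ L := by
  intro x hx
  -- h is additive / semilinear in the second argument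
  have hadd2 : ∀ a y z : V, h a (y + z) = h a y + h a z := by
    intro a y z
    rw [hconj a (y + z), hadd, map_add, ← hconj, ← hconj]
  have hsmul2 : ∀ (e : E) (a y : V), h a (e • y) = ι e * h a y := by
    intro e a y
    rw [hconj a (e • y), hsmul, map_mul, ← hconj]
  have hzero2 : ∀ a : V, h a 0 = 0 := by
    intro a
    have h0 := hadd2 a 0 0
    rw [add_zero] at h0
    exact (add_eq_left.mp h0.symm)
  have hneg2 : ∀ a y : V, h a (-y) = -h a y := by
    intro a y
    have h0 := hadd2 a y (-y)
    rw [add_neg_cancel, hzero2] at h0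
    exact (neg_eq_of_add_eq_zero_right h0.symm).symm
  -- ι preserves the integral closure
  have hιint : ∀ c ∈ integralClosure ℤ_[p] E, ι c ∈ integralClosure ℤ_[p] E := by
    intro c hc
    exact IsIntegral.map (AlgEquiv.restrictScalars ℤ_[p] ι).toAlgHom hc
  -- trace is invariant under ι
  have hιtr : ∀ z : E, Algebra.trace ℚ_[p] E (ι z) = Algebra.trace ℚ_[p] E z := by
    intro z
    exact Algebra.trace_eq_of_algEquiv (AlgEquiv.restrictScalars ℚ_[p] ι) z
  -- h x z is in the dual (trace-dual) for z ∈ L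
  have hdual : ∀ z ∈ L, ∀ c ∈ integralClosure ℤ_[p] E,
      ∃ k : ℤ_[p], Algebra.trace ℚ_[p] E (h x z * c) = algebraMap ℤ_[p] ℚ_[p] k := by
    intro z hz c hc
    obtain ⟨k, hk⟩ := hx (ι c • z) (hOL _ (hιint c hc) z hz)
    refine ⟨k, ?_⟩
    rw [hsmul2, hinv] at hk
    rwa [mul_comm]
  have hιdual : ∀ z ∈ L, ∀ c ∈ integralClosure ℤ_[p] E,
      ∃ k : ℤ_[p], Algebra.trace ℚ_[p] E (ι (h x z) * c) = algebraMap ℤ_[p] ℚ_[p] k := by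
    intro z hz c hc
    obtain ⟨k, hk⟩ := hdual z hz (ι c) (hιint c hc)
    refine ⟨k, ?_⟩
    have he : ι (h x z) * c = ι (h x z * ι c) := by rw [map_mul, hinv]
    rw [he, hιtr]
    exact hk
  have hD : ∀ z ∈ L, ∀ d : E, (∀ e : E, (∀ c ∈ integralClosure ℤ_[p] E,
        ∃ k : ℤ_[p], Algebra.trace ℚ_[p] E (e * c) = algebraMap ℤ_[p] ℚ_[p] k) →
      d * e ∈ integralClosure ℤ_[p] E) → ι d * h x z ∈ integralClosure ℤ_[p] E := by
    intro z hz d hd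
    have h1 : d * ι (h x z) ∈ integralClosure ℤ_[p] E := hd _ (hιdual z hz)
    have h2 := hιint _ h1
    rwa [map_mul, hinv] at h2
  -- Step A: the key divisibility for h x w, w in the closure
  have hstep : ∀ w ∈ AddSubgroup.closure {w : V | ∃ y ∈ L, ∃ y' ∈ L,
      ∃ d : E, (∀ e : E, (∀ c ∈ integralClosure ℤ_[p] E,
          ∃ k : ℤ_[p], Algebra.trace ℚ_[p] E (e * c) = algebraMap ℤ_[p] ℚ_[p] k) →
        d * e ∈ integralClosure ℤ_[p] E) ∧
      ∃ z ∈ L, w = (h y y' * d) • z},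
      ∀ u ∈ L, ∀ u' ∈ L, ∀ d' : E, (∀ e : E, (∀ c ∈ integralClosure ℤ_[p] E,
          ∃ k : ℤ_[p], Algebra.trace ℚ_[p] E (e * c) = algebraMap ℤ_[p] ℚ_[p] k) →
        d' * e ∈ integralClosure ℤ_[p] E) →
        Ring.inverse σ * h x w * (h u u' * d') ∈ integralClosure ℤ_[p] E := by
    intro w hw
    refine AddSubgroup.closure_induction ?_ ?_ ?_ ?_ hw
    · rintro w ⟨y, hy, y', hy', d, hd, z, hz, rfl⟩ u hu u' hu' d' hd'
      obtain ⟨c, hc, hcEq⟩ := hσdvd u hu u' hu' y' hy' y hy d' hd'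
      have hcEq' : h u u' * ι (h y y') * d' = σ * c := by
        rw [← hconj y' y]; exact hcEq
      have hσ1 : Ring.inverse σ * σ = 1 := Ring.inverse_mul_cancel σ hσ
      have key : Ring.inverse σ * h x ((h y y' * d) • z) * (h u u' * d')
          = c * (ι d * h x z) := by
        rw [hsmul2, map_mul]
        linear_combination (Ring.inverse σ * (ι d * h x z)) * hcEq'
          + (c * (ι d * h x z)) * hσ1
      rw [key]
      exact mul_mem hc (hD z hz d hd)
    · intro u hu u' hu' d' hd'
      rw [hzero2, mul_zero, zero_mul]
      exact zero_mem _
    · intro w₁ w₂ hw₁ hw₂ ih₁ ih₂ u hu u' hu' d' hd'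
      have he : Ring.inverse σ * h x (w₁ + w₂) * (h u u' * d')
          = Ring.inverse σ * h x w₁ * (h u u' * d')
            + Ring.inverse σ * h x w₂ * (h u u' * d') := by
        rw [hadd2]; ring
      rw [he]
      exact add_mem (ih₁ u hu u' hu' d' hd') (ih₂ u hu u' hu' d' hd')
    · intro w₁ hw₁ ih u hu u' hu' d' hd'
      have he : Ring.inverse σ * h x (-w₁) * (h u u' * d')
          = -(Ring.inverse σ * h x w₁ * (h u u' * d')) := by
        rw [hneg2]; ring
      rw [he]
      exact neg_mem (ih u hu u' hu' d' hd')
  -- Step B: conclude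
  have hmain : ∀ w ∈ AddSubgroup.closure {w : V | ∃ y ∈ L, ∃ y' ∈ L,
      ∃ d : E, (∀ e : E, (∀ c ∈ integralClosure ℤ_[p] E,
          ∃ k : ℤ_[p], Algebra.trace ℚ_[p] E (e * c) = algebraMap ℤ_[p] ℚ_[p] k) →
        d * e ∈ integralClosure ℤ_[p] E) ∧
      ∃ z ∈ L, w = (h y y' * d) • z},
      (h x s * Ring.inverse σ) • w ∈ L := by
    intro w hw
    refine AddSubgroup.closure_induction ?_ ?_ ?_ ?_ hw
    · rintro w ⟨y, hy, y', hy', d, hd, z, hz, rfl⟩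
      rw [smul_smul]
      refine hOL _ ?_ z hz
      have he : h x s * Ring.inverse σ * (h y y' * d)
          = Ring.inverse σ * h x s * (h y y' * d) := by ring
      rw [he]
      exact hstep s hs y hy y' hy' d hd
    · rw [smul_zero]; exact zero_mem L
    · intro w₁ w₂ _ _ ih₁ ih₂
      rw [smul_add]; exact add_mem ih₁ ih₂
    · intro w₁ _ ih
      rw [smul_neg]; exact neg_mem ih
  have hSx : S x - x = -((h x s * Ring.inverse σ) • s) := by
    rw [hS x]; abel
  rw [hSx]
  exact neg_mem (hmain s hs)
end

section
/- Let V be a two-dimensional étale ℚ-algebra with non-trivial ℚ-algebra automorphism σ, equipped with the quadratic form q(x) = x·σ(x), and let L ⊆ V be a full ℤ-lattice with multiplier order Λ = {x ∈ V : xL ⊆ L}. Then the special orthogonal group of L is SO(L) = {τ_y : y ∈ (Λ^×)¹}, where τ_y(x) = yx and (Λ^×)¹ = {y ∈ Λ^× : q(y) = 1}. Moreover, if L is not equivalent to σ(L) (i.e., there is no α ∈ V with q(α) = 1 and L = α·σ(L)) then O(L) = SO(L), while if L = α·σ(L) for some α with q(α)=1 then O(L) = ⟨SO(L), σ∘τ_{σ(α)}⟩.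 -/
open Submodule Module

lemma det_eq_of_basis_images' {V : Type*} [AddCommGroup V] [Module ℚ V]
    {ι : Type*} [Fintype ι] [DecidableEq ι] (B : Basis ι ℚ V) (f : V →ₗ[ℚ] V)
    (M : Matrix ι ι ℚ) (h : ∀ j, f (B j) = ∑ i, M i j • B i) :
    LinearMap.det f = M.det := by
  have : f = Matrix.toLin B B M := by
    apply B.ext
    intro j
    rw [h j, Matrix.toLin_self]
  rw [this, LinearMap.det_toLin]

lemma lattice_det_pm {V : Type*} [AddCommGroup V] [Module ℚ V]
    (L : Submodule ℤ V) (hfg : L.FG) (hfull : Submodule.span ℚ (L : Set V) = ⊤)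
    (f : V ≃ₗ[ℚ] V) (hL : ∀ x, x ∈ L ↔ f x ∈ L) :
    LinearMap.det (f : V →ₗ[ℚ] V) = 1 ∨ LinearMap.det (f : V →ₗ[ℚ] V) = -1 := by
  classical
  haveI : Module.Finite ℤ L := Module.Finite.iff_fg.mpr hfg
  haveI : Module.IsTorsionFree ℤ V := Module.IsTorsionFree.trans_faithfulSMul ℤ ℚ V
  haveI : Module.Free ℤ L := Module.free_of_finite_type_torsion_free'
  set ι := Module.Free.ChooseBasisIndex ℤ L with hι
  let b : Basis ι ℤ L := Module.Free.chooseBasis ℤ L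
  let v : ι → V := fun i => (b i : V)
  have hvL : ∀ i, v i ∈ L := fun i => (b i).2
  have hli_int : LinearIndependent ℤ v :=
    b.linearIndependent.map' L.subtype (Submodule.ker_subtype L)
  have hli : LinearIndependent ℚ v := hli_int.localization ℚ (nonZeroDivisors ℤ)
  have hspan_int : Submodule.span ℤ (Set.range v) = L := by
    have : Set.range v = L.subtype '' Set.range b := by
      rw [← Set.range_comp]; rfl
    rw [this, ← Submodule.map_span, b.span_eq, Submodule.map_top, Submodule.range_subtype]
  have hspan : Submodule.span ℚ (Set.range v) = ⊤ := by
    rw [← span_span_of_tower (R := ℤ), hspan_int, hfull]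
  let B : Basis ι ℚ V := Basis.mk hli (le_of_eq hspan.symm)
  have hB : ∀ i, B i = v i := fun i => Basis.mk_apply hli _ i
  -- integral matrices
  have key : ∀ (g : V ≃ₗ[ℚ] V), (∀ x, x ∈ L → g x ∈ L) →
      ∃ M : Matrix ι ι ℤ, LinearMap.det (g : V →ₗ[ℚ] V) = (M.det : ℚ) := by
    intro g hg
    let wj : ι → L := fun j => ⟨g (v j), hg _ (hvL j)⟩
    let M : Matrix ι ι ℤ := fun i j => b.repr (wj j) i
    refine ⟨M, ?_⟩
    have h : ∀ j, g (B j) = ∑ i, ((M i j : ℚ)) • B i := by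
      intro j
      have h1 : (∑ i, M i j • b i : L) = wj j := b.sum_repr (wj j)
      have h2 : ((∑ i, M i j • b i : L) : V) = g (v j) := by rw [h1]
      rw [hB]
      rw [← h2]
      push_cast
      refine Finset.sum_congr rfl fun i _ => ?_
      rw [hB, Int.cast_smul_eq_zsmul]
    have := det_eq_of_basis_images' B (g : V →ₗ[ℚ] V) (fun i j => ((M i j : ℚ))) (by simpa using h)
    rw [this]
    exact (RingHom.map_det (Int.castRingHom ℚ) M).symm
  obtain ⟨M1, hM1⟩ := key f (fun x hx => (hL x).mp hx)
  obtain ⟨M2, hM2⟩ := key f.symm (fun x hx => (hL (f.symm x)).mpr (by rwa [f.apply_symm_apply]))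
  have hmul : (M1.det * M2.det : ℚ) = 1 := by
    rw [← hM1, ← hM2, ← LinearMap.det_comp]
    have : (f : V →ₗ[ℚ] V) ∘ₗ (f.symm : V →ₗ[ℚ] V) = LinearMap.id := by
      ext x; simp
    rw [this, LinearMap.det_id]
  have : M1.det * M2.det = 1 := by exact_mod_cast hmul
  have : M1.det = 1 ∨ M1.det = -1 := Int.isUnit_iff.mp (IsUnit.of_mul_eq_one _ this)
  rcases this with h | h
  · left; rw [hM1, h]; norm_num
  · right; rw [hM1, h]; norm_num




/-- Let `V` be a two-dimensional étale `ℚ`-algebra with nontrivial involution `σ` and norm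
form `q(x) = x·σ(x)`, and `L ⊆ V` a full `ℤ`-lattice with multiplier order
`Λ = {x ∈ V : xL ⊆ L}`.  Then `SO(L) = {τ_y : y ∈ (Λ^×)¹}` where `τ_y(x) = yx`; if `L` is
not equivalent to `σ(L)` then `O(L) = SO(L)`; and if `L = α·σ(L)` with `q(α) = 1` then
`O(L) = ⟨SO(L), σ∘τ_{σ(α)}⟩`, i.e. every improper isometry is `σ∘τ_{σ(α)}∘τ_y` for some
`y ∈ (Λ^×)¹`. -/
theorem binary_lattice_orthogonal_group
    (V : Type*) [CommRing V] [Algebra ℚ V] [FiniteDimensional ℚ V]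
    (hdim : Module.finrank ℚ V = 2)
    (σ : V ≃ₐ[ℚ] V) (hσ2 : ∀ x, σ (σ x) = x) (hσne : ∃ x, σ x ≠ x)
    (L : Submodule ℤ V) (hfg : L.FG) (hfull : Submodule.span ℚ (L : Set V) = ⊤)
    (Λ : Set V) (hΛ : Λ = {x : V | ∀ y ∈ L, x * y ∈ L}) :
    (∀ f : V ≃ₗ[ℚ] V,
        ((∀ x, f x * σ (f x) = x * σ x) ∧ (∀ x, x ∈ L ↔ f x ∈ L) ∧
            LinearMap.det (f : V →ₗ[ℚ] V) = 1) ↔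
          (∃ y ∈ Λ, (∃ z ∈ Λ, y * z = 1) ∧ y * σ y = 1 ∧ ∀ x, f x = y * x)) ∧
      ((¬ ∃ α : V, α * σ α = 1 ∧ (∀ x : V, x ∈ L ↔ ∃ m ∈ L, x = α * σ m)) →
        ∀ f : V ≃ₗ[ℚ] V, (∀ x, f x * σ (f x) = x * σ x) → (∀ x, x ∈ L ↔ f x ∈ L) →
          LinearMap.det (f : V →ₗ[ℚ] V) = 1) ∧
      (∀ α : V, α * σ α = 1 → (∀ x : V, x ∈ L ↔ ∃ m ∈ L, x = α * σ m) →
        ∀ f : V ≃ₗ[ℚ] V, (∀ x, f x * σ (f x) = x * σ x) → (∀ x, x ∈ L ↔ f x ∈ L) →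
          (∃ y ∈ Λ, (∃ z ∈ Λ, y * z = 1) ∧ y * σ y = 1 ∧ ∀ x, f x = y * x) ∨
            (∃ y ∈ Λ, (∃ z ∈ Λ, y * z = 1) ∧ y * σ y = 1 ∧
              ∀ x, f x = α * σ y * σ x)) := by
  classical
  haveI hV : Nontrivial V := by
    by_contra h
    rw [not_nontrivial_iff_subsingleton] at h
    rw [finrank_zero_of_subsingleton] at hdim
    omega
  obtain ⟨x₀, hx₀⟩ := hσne
  set w : V := x₀ - σ x₀ with hw
  have hσw : σ w = -w := by rw [hw, map_sub, hσ2]; ring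
  have hw0 : w ≠ 0 := sub_ne_zero.mpr (Ne.symm hx₀)
  set C : ℚ →+* V := algebraMap ℚ V with hC
  have hinj : Function.Injective C := RingHom.injective C
  have hsm : ∀ (r : ℚ) (x : V), r • x = C r * x := fun r x => Algebra.smul_def r x
  have hσC : ∀ r : ℚ, σ (C r) = C r := fun r => σ.commutes r
  have hli : LinearIndependent ℚ ![(1 : V), w] := by
    rw [LinearIndependent.pair_iff]
    intro s t hst
    have h2 : s • (1:V) - t • w = 0 := by
      have h3 := congrArg σ hst
      rw [map_add, map_smul, map_smul, map_one, hσw, map_zero, smul_neg,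
        ← sub_eq_add_neg] at h3
      exact h3
    have hs : s = 0 := by
      have h3 : (s + s) • (1:V) = (s • (1:V) + t • w) + (s • (1:V) - t • w) := by module
      rw [hst, h2, add_zero] at h3
      rcases smul_eq_zero.mp h3 with h | h
      · linarith
      · exact absurd h one_ne_zero
    refine ⟨hs, ?_⟩
    rw [hs, zero_smul, zero_add] at hst
    rcases smul_eq_zero.mp hst with h | h
    · exact h
    · exact absurd h hw0
  have hcard : Fintype.card (Fin 2) = Module.finrank ℚ V := by simp [hdim]
  set B : Basis (Fin 2) ℚ V := basisOfLinearIndependentOfCardEqFinrank hli hcard with hBdef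
  have hBc : ⇑B = ![(1:V), w] := coe_basisOfLinearIndependentOfCardEqFinrank hli hcard
  have hB0 : B 0 = 1 := by rw [hBc]; rfl
  have hB1 : B 1 = w := by rw [hBc]; rfl
  have hrep : ∀ x : V, ∃ a e : ℚ, x = C a + C e * w := by
    intro x
    refine ⟨B.repr x 0, B.repr x 1, ?_⟩
    have h := B.sum_repr x
    rw [Fin.sum_univ_two, hB0, hB1, hsm, hsm, mul_one] at h
    exact h.symm
  have hcoeff0 : ∀ a e : ℚ, C a + C e * w = 0 → a = 0 ∧ e = 0 := by
    intro a e h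
    refine LinearIndependent.pair_iff.mp hli a e ?_
    rw [hsm, hsm, mul_one]
    exact h
  have hwcoef : ∀ t t' : ℚ, C t * w = C t' * w → t = t' := by
    intro t t' h
    have h2 : (t - t') • w = 0 := by rw [hsm, map_sub]; linear_combination h
    rcases smul_eq_zero.mp h2 with h | h
    · linarith
    · exact absurd h hw0
  obtain ⟨c, c2, hcw⟩ := hrep (w * w)
  have hc : w * w = C c := by
    have hs1 : σ (w * w) = w * w := by rw [map_mul, hσw]; ring
    rw [hcw, map_add, map_mul, hσC, hσC, hσw] at hs1
    have h0 := hcoeff0 0 (c2 + c2) (by rw [map_zero, map_add]; linear_combination -hs1)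
    rw [hcw, show c2 = 0 by linarith [h0.2], map_zero, zero_mul, add_zero]
  have hanti : ∀ z : V, σ z = -z → ∃ t : ℚ, z = C t * w := by
    intro z hz
    obtain ⟨a, e, hae⟩ := hrep z
    have hsz : σ z = C a - C e * w := by rw [hae, map_add, map_mul, hσC, hσC, hσw]; ring
    rw [hz, hae] at hsz
    have h0 := hcoeff0 (a + a) 0 (by rw [map_add, map_zero]; linear_combination -hsz)
    exact ⟨e, by rw [hae, show a = 0 by linarith [h0.1], map_zero, zero_add]⟩
  have main : ∀ f : V ≃ₗ[ℚ] V, (∀ x, f x * σ (f x) = x * σ x) →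
      ∃ bq : ℚ, σ (f 1) * f w = C bq * w ∧
        LinearMap.det (f : V →ₗ[ℚ] V) = bq ∧
        (bq = 1 → ∀ x, f x = f 1 * x) ∧ (bq = -1 → ∀ x, f x = f 1 * σ x) := by
    intro f hiso
    have hu : f 1 * σ (f 1) = 1 := by
      have h := hiso 1
      rwa [map_one σ, mul_one] at h
    have hpol : ∀ x : V, σ (f 1) * f x + f 1 * σ (f x) = x + σ x := by
      intro x
      have h1 := hiso (x + 1)
      simp only [map_add, map_one] at h1
      have h2 := hiso x
      linear_combination h1 - h2 - hu
    have hgw : σ (σ (f 1) * f w) = -(σ (f 1) * f w) := by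
      rw [map_mul, hσ2]
      have h := hpol w
      rw [hσw] at h
      linear_combination h
    obtain ⟨bq, hbq⟩ := hanti _ hgw
    have hfw : f w = f 1 * (C bq * w) := by
      have h1 : f 1 * (σ (f 1) * f w) = f w := by linear_combination (f w) * hu
      rw [← h1, hbq]
    obtain ⟨a, e, hae⟩ := hrep (f 1)
    have hσu : σ (f 1) = C a - C e * w := by
      rw [hae, map_add, map_mul, hσC, hσC, hσw]; ring
    have hN : a ^ 2 - c * e ^ 2 = 1 := by
      apply hinj
      rw [map_one]
      have h1 : f 1 * σ (f 1) = C (a ^ 2 - c * e ^ 2) := by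
        rw [hσu, hae, map_sub, map_mul, map_pow, map_pow]
        linear_combination (-(C e ^ 2)) * hc
      rw [← h1, hu]
    have hdet : LinearMap.det (f : V →ₗ[ℚ] V) = bq := by
      have hM := det_eq_of_basis_images' B (f : V →ₗ[ℚ] V)
          !![a, bq * e * c; e, bq * a] ?_
      · rw [hM, Matrix.det_fin_two_of]
        linear_combination bq * hN
      · intro j
        fin_cases j
        · show f (B 0) = _
          rw [Fin.sum_univ_two, hB0, hB1]
          show f 1 = a • (1:V) + e • w
          rw [hsm, hsm, mul_one]
          exact hae
        · show f (B 1) = _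
          rw [Fin.sum_univ_two, hB0, hB1]
          show f w = (bq * e * c) • (1:V) + (bq * a) • w
          rw [hsm, hsm, mul_one, hfw, hae,
            show C (bq * e * c) = C bq * C e * C c by rw [map_mul, map_mul],
            show C (bq * a) = C bq * C a by rw [map_mul]]
          linear_combination (C e * C bq) * hc
    refine ⟨bq, hbq, hdet, ?_, ?_⟩
    · intro hbq1 x
      obtain ⟨a', e', hx⟩ := hrep x
      have hf : f x = C a' * f 1 + C e' * f w := by
        rw [hx]
        have e1 : f (C a' + C e' * w) = f (a' • 1 + e' • w) := by
          rw [hsm, hsm, mul_one]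
        rw [e1, map_add, map_smul, map_smul, hsm, hsm]
      rw [hf, hfw, hbq1, map_one C, hx]
      ring
    · intro hbqm x
      obtain ⟨a', e', hx⟩ := hrep x
      have hσx : σ x = C a' - C e' * w := by
        rw [hx, map_add, map_mul, hσC, hσC, hσw]; ring
      have hf : f x = C a' * f 1 + C e' * f w := by
        rw [hx]
        have e1 : f (C a' + C e' * w) = f (a' • 1 + e' • w) := by
          rw [hsm, hsm, mul_one]
        rw [e1, map_add, map_smul, map_smul, hsm, hsm]
      rw [hf, hfw, hbqm, map_neg C, map_one C, hσx]
      ring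
  have hmu : ∀ (f : V ≃ₗ[ℚ] V) (y : V), (∀ x, x ∈ L ↔ f x ∈ L) → (∀ x, f x = y * x) →
      y ∈ Λ ∧ ∃ z ∈ Λ, y * z = 1 := by
    intro f y hLf hfy
    have hyz : y * f.symm 1 = 1 := by rw [← hfy, f.apply_symm_apply]
    refine ⟨?_, f.symm 1, ?_, hyz⟩
    · rw [hΛ]
      intro m hm
      rw [← hfy]
      exact (hLf m).mp hm
    · rw [hΛ]
      intro m hm
      have h1 : f.symm m ∈ L := (hLf _).mpr (by rwa [f.apply_symm_apply])
      have h2 : f.symm 1 * m = f.symm 1 * y * f.symm m := by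
        rw [mul_assoc, ← hfy (f.symm m), f.apply_symm_apply]
      rw [h2, mul_comm (f.symm 1) y, hyz, one_mul]
      exact h1
  refine ⟨?_, ?_, ?_⟩
  · -- part 1
    intro f
    constructor
    · rintro ⟨hiso, hLf, hdet1⟩
      obtain ⟨bq, hbqw, hdet, hmul1, _⟩ := main f hiso
      rw [hdet] at hdet1
      have hfx := hmul1 hdet1
      obtain ⟨hyΛ, z, hzΛ, hyz⟩ := hmu f (f 1) hLf hfx
      refine ⟨f 1, hyΛ, ⟨z, hzΛ, hyz⟩, ?_, hfx⟩
      have h := hiso 1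
      rwa [map_one σ, mul_one] at h
    · rintro ⟨y, hyΛ, ⟨z, hzΛ, hyz⟩, hyq, hfx⟩
      have hiso : ∀ x, f x * σ (f x) = x * σ x := by
        intro x
        rw [hfx, map_mul]
        linear_combination (x * σ x) * hyq
      have hLf : ∀ x, x ∈ L ↔ f x ∈ L := by
        intro x
        rw [hfx]
        constructor
        · intro hx
          rw [hΛ] at hyΛ
          exact hyΛ x hx
        · intro hx
          have h3 : x = z * (y * x) := by linear_combination (-x) * hyz
          rw [h3]
          rw [hΛ] at hzΛ
          exact hzΛ _ hx
      refine ⟨hiso, hLf, ?_⟩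
      obtain ⟨bq, hbqw, hdet, _, _⟩ := main f hiso
      have h5 : σ (f 1) * f w = C 1 * w := by
        rw [hfx 1, hfx w, mul_one, map_one C, one_mul]
        linear_combination w * hyq
      have hbq1 : bq = 1 := hwcoef _ _ (hbqw.symm.trans h5)
      rw [hdet, hbq1]
  · -- part 2
    intro hne f hiso hLf
    obtain ⟨bq, hbqw, hdet, hmul1, hmulm⟩ := main f hiso
    rcases lattice_det_pm L hfg hfull f hLf with h1 | h1
    · exact h1
    · exfalso
      rw [hdet] at h1
      have hfx := hmulm h1
      have hu : f 1 * σ (f 1) = 1 := by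
        have h := hiso 1
        rwa [map_one σ, mul_one] at h
      refine hne ⟨f 1, hu, fun x => ⟨fun hx => ⟨f.symm x,
        (hLf _).mpr (by rwa [f.apply_symm_apply]),
        by rw [← hfx, f.apply_symm_apply]⟩, ?_⟩⟩
      rintro ⟨m, hm, rfl⟩
      rw [← hfx]
      exact (hLf m).mp hm
  · -- part 3
    intro α hα hLα f hiso hLf
    obtain ⟨bq, hbqw, hdet, hmul1, hmulm⟩ := main f hiso
    have hu : f 1 * σ (f 1) = 1 := by
      have h := hiso 1
      rwa [map_one σ, mul_one] at h
    rcases lattice_det_pm L hfg hfull f hLf with h1 | h1 <;> rw [hdet] at h1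
    · left
      have hfx := hmul1 h1
      obtain ⟨hyΛ, z, hzΛ, hyz⟩ := hmu f (f 1) hLf hfx
      exact ⟨f 1, hyΛ, ⟨z, hzΛ, hyz⟩, hu, hfx⟩
    · right
      have hfx := hmulm h1
      refine ⟨α * σ (f 1), ?_, ⟨σ (α * σ (f 1)), ?_, ?_⟩, ?_, ?_⟩
      · rw [hΛ]
        intro m hm
        apply (hLα _).mpr
        refine ⟨f m, (hLf m).mp hm, ?_⟩
        rw [hfx m, map_mul, hσ2]
        ring
      · rw [hΛ]
        intro m hm
        obtain ⟨m₁, hm₁, hme⟩ := (hLα m).mp hm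
        have h6 : σ (α * σ (f 1)) * m = f m₁ := by
          rw [hme, hfx m₁, map_mul, hσ2]
          linear_combination (f 1 * σ m₁) * hα
        rw [h6]
        exact (hLf m₁).mp hm₁
      · rw [map_mul, hσ2]
        linear_combination (f 1 * σ (f 1)) * hα + hu
      · rw [map_mul, hσ2]
        linear_combination (f 1 * σ (f 1)) * hα + hu
      · intro x
        rw [hfx x, map_mul, hσ2]
        linear_combination (-(f 1 * σ x)) * hα
end
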